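/- arXiv:1304.7960 — 6 statements merged into one kernel-verified Lean document; each statement's English description precedes it below -/
import Mathlib

section
/- If a sub-σ-algebra ℬ has an atom D (an element D ∈ ℬ such that every B ∈ ℬ satisfies μ(B ∩ D) = 0 or μ(D \ B) = 0), then β(ℬ, ℬ) ≤ 2(1 − μ(D)). -/
/-!
Write `d = μ D`. Because `D` is an atom of `𝒜`, every `A ∈ 𝒜` is independent of every `B`
under `μ (· | D)`: `μ (A ∩ B ∩ D) * d = μ (A ∩ D) * μ (B ∩ D)`. Hence the part of
`μ (A ∩ B) - μ A * μ B` living on `D` is `μ (A ∩ B ∩ D) * (1 - d)`, and what remains is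
controlled by `μ (A ∩ B ∩ Dᶜ)` and `μ A * μ B - μ (A ∩ D) * μ (B ∩ D) ≥ 0`. Summed over two
partitions these three error terms add up to `d (1 - d) + (1 - d) + (1 - d²) = 2 (1 - d²)`,
so `β(𝒜, ℬ) ≤ 1 - d² ≤ 2 (1 - d)`.
-/

open MeasureTheory

/-- The set of values `(1/2) ∑ᵢ ∑ⱼ |μ(Aᵢ ∩ Bⱼ) - μ(Aᵢ)μ(Bⱼ)|` over finite
partitions `{Aᵢ} ⊆ 𝒜`, `{Bⱼ} ⊆ ℬ` of `Ω`. -/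
def betaSet {Ω : Type*} (m0 𝒜 ℬ : MeasurableSpace Ω) (μ : @Measure Ω m0) : Set ℝ :=
  {x | ∃ (m n : ℕ) (A : Fin m → Set Ω) (B : Fin n → Set Ω),
    (∀ i, MeasurableSet[𝒜] (A i)) ∧ (∀ j, MeasurableSet[ℬ] (B j)) ∧
    Pairwise (Function.onFun Disjoint A) ∧ Pairwise (Function.onFun Disjoint B) ∧
    (⋃ i, A i) = Set.univ ∧ (⋃ j, B j) = Set.univ ∧
    x = (1/2) * ∑ i, ∑ j,
      |(μ (A i ∩ B j)).toReal - (μ (A i)).toReal * (μ (B j)).toReal|}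

/-- The β-mixing coefficient of the pair of σ-algebras `𝒜`, `ℬ`. -/
noncomputable def betaMix {Ω : Type*} (m0 𝒜 ℬ : MeasurableSpace Ω)
    (μ : @Measure Ω m0) : ℝ :=
  sSup (betaSet m0 𝒜 ℬ μ)

open Set Function

namespace MeasureTheory

variable {Ω : Type*} {mΩ : MeasurableSpace Ω} {μ : Measure Ω}

lemma measure_inter_inter_mul_eq_of_atom {A B D : Set Ω}
    (hA : μ (A ∩ D) = 0 ∨ μ (D \ A) = 0) :
    μ (A ∩ B ∩ D) * μ D = μ (A ∩ D) * μ (B ∩ D) := by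
  rcases hA with hnull | hconull
  · have : μ (A ∩ B ∩ D) = 0 :=
      measure_mono_null (inter_subset_inter_left D inter_subset_left) hnull
    simp [this, hnull]
  · have hAD : μ (A ∩ D) = μ D := by
      rw [inter_comm]
      exact measure_inter_conull' hconull
    have hABD : μ (A ∩ B ∩ D) = μ (B ∩ D) := by
      rw [inter_assoc, inter_comm]
      exact measure_inter_conull'
        (measure_mono_null (sdiff_subset_sdiff_left inter_subset_right) hconull)
    rw [hABD, hAD, mul_comm]

lemma sum_measureReal_inter_of_partition [IsFiniteMeasure μ] {ι : Type*} [Fintype ι]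
    {s : ι → Set Ω} (hs : ∀ i, MeasurableSet (s i)) (hd : Pairwise (Disjoint on s))
    (hu : ⋃ i, s i = univ) {T : Set Ω} (hT : MeasurableSet T) :
    ∑ i, μ.real (s i ∩ T) = μ.real T := by
  rw [← measureReal_iUnion_fintype
    (fun i j hij => (hd hij).mono inter_subset_left inter_subset_left)
    (fun i => (hs i).inter hT), ← iUnion_inter, hu, univ_inter]

lemma sum_measureReal_of_partition [IsProbabilityMeasure μ] {ι : Type*} [Fintype ι]
    {s : ι → Set Ω} (hs : ∀ i, MeasurableSet (s i)) (hd : Pairwise (Disjoint on s))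
    (hu : ⋃ i, s i = univ) :
    ∑ i, μ.real (s i) = 1 := by
  simpa using sum_measureReal_inter_of_partition (μ := μ) hs hd hu MeasurableSet.univ

lemma sum_sum_measureReal_inter_inter_of_partition [IsFiniteMeasure μ]
    {ι κ : Type*} [Fintype ι] [Fintype κ] {A : ι → Set Ω} {B : κ → Set Ω}
    (hA : ∀ i, MeasurableSet (A i)) (hAd : Pairwise (Disjoint on A)) (hAu : ⋃ i, A i = univ)
    (hB : ∀ j, MeasurableSet (B j)) (hBd : Pairwise (Disjoint on B)) (hBu : ⋃ j, B j = univ)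
    {T : Set Ω} (hT : MeasurableSet T) :
    ∑ i, ∑ j, μ.real (A i ∩ B j ∩ T) = μ.real T := by
  simp_rw [inter_assoc, inter_left_comm (A _),
    sum_measureReal_inter_of_partition hB hBd hBu ((hA _).inter hT)]
  exact sum_measureReal_inter_of_partition hA hAd hAu hT

lemma abs_measureReal_inter_sub_mul_le_of_atom [IsProbabilityMeasure μ] {A B D : Set Ω}
    (hD : MeasurableSet D) (hA : μ (A ∩ D) = 0 ∨ μ (D \ A) = 0) :
    |μ.real (A ∩ B) - μ.real A * μ.real B| ≤
      μ.real (A ∩ B ∩ D) * μ.real Dᶜ + μ.real (A ∩ B ∩ Dᶜ) +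
        (μ.real A * μ.real B - μ.real (A ∩ D) * μ.real (B ∩ D)) := by
  have hatom : μ.real (A ∩ B ∩ D) * μ.real D = μ.real (A ∩ D) * μ.real (B ∩ D) := by
    simp only [measureReal_def, ← ENNReal.toReal_mul, measure_inter_inter_mul_eq_of_atom hA]
  have hsplit : μ.real (A ∩ B ∩ D) + μ.real (A ∩ B ∩ Dᶜ) = μ.real (A ∩ B) := by
    rw [← sdiff_eq]
    exact measureReal_inter_add_sdiff hD
  have hprod : μ.real (A ∩ D) * μ.real (B ∩ D) ≤ μ.real A * μ.real B :=
    mul_le_mul (measureReal_mono inter_subset_left) (measureReal_mono inter_subset_left)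
      measureReal_nonneg measureReal_nonneg
  have hD_part : 0 ≤ μ.real (A ∩ B ∩ D) * μ.real Dᶜ :=
    mul_nonneg measureReal_nonneg measureReal_nonneg
  have hDc_part : 0 ≤ μ.real (A ∩ B ∩ Dᶜ) := measureReal_nonneg
  rw [probReal_compl_eq_one_sub hD] at hD_part ⊢
  rw [abs_le]
  constructor <;> linarith

lemma sum_abs_measureReal_inter_sub_mul_le_of_atom [IsProbabilityMeasure μ]
    {ι κ : Type*} [Fintype ι] [Fintype κ] {A : ι → Set Ω} {B : κ → Set Ω}
    (hA : ∀ i, MeasurableSet (A i)) (hAd : Pairwise (Disjoint on A)) (hAu : ⋃ i, A i = univ)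
    (hB : ∀ j, MeasurableSet (B j)) (hBd : Pairwise (Disjoint on B)) (hBu : ⋃ j, B j = univ)
    {D : Set Ω} (hD : MeasurableSet D) (hatom : ∀ i, μ (A i ∩ D) = 0 ∨ μ (D \ A i) = 0) :
    ∑ i, ∑ j, |μ.real (A i ∩ B j) - μ.real (A i) * μ.real (B j)| ≤
      2 * (1 - μ.real D ^ 2) := by
  calc ∑ i, ∑ j, |μ.real (A i ∩ B j) - μ.real (A i) * μ.real (B j)|
      ≤ ∑ i, ∑ j, (μ.real (A i ∩ B j ∩ D) * μ.real Dᶜ + μ.real (A i ∩ B j ∩ Dᶜ) +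
          (μ.real (A i) * μ.real (B j) - μ.real (A i ∩ D) * μ.real (B j ∩ D))) := by
        gcongr with i _ j _
        exact abs_measureReal_inter_sub_mul_le_of_atom hD (hatom i)
    _ = μ.real D * μ.real Dᶜ + μ.real Dᶜ +
          ((∑ i, μ.real (A i)) * ∑ j, μ.real (B j) -
            (∑ i, μ.real (A i ∩ D)) * ∑ j, μ.real (B j ∩ D)) := by
        simp only [Finset.sum_add_distrib, Finset.sum_sub_distrib, ← Finset.sum_mul,
          Finset.sum_mul_sum,
          sum_sum_measureReal_inter_inter_of_partition hA hAd hAu hB hBd hBu hD,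
          sum_sum_measureReal_inter_inter_of_partition hA hAd hAu hB hBd hBu hD.compl]
    _ = 2 * (1 - μ.real D ^ 2) := by
        rw [sum_measureReal_of_partition hA hAd hAu, sum_measureReal_of_partition hB hBd hBu,
          sum_measureReal_inter_of_partition hA hAd hAu hD,
          sum_measureReal_inter_of_partition hB hBd hBu hD, probReal_compl_eq_one_sub hD]
        ring

theorem betaMix_le_one_sub_sq_of_atom [IsProbabilityMeasure μ] {𝒜 ℬ : MeasurableSpace Ω}
    (h𝒜 : 𝒜 ≤ mΩ) (hℬ : ℬ ≤ mΩ) {D : Set Ω} (hD : MeasurableSet[mΩ] D)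
    (hatom : ∀ A, MeasurableSet[𝒜] A → μ (A ∩ D) = 0 ∨ μ (D \ A) = 0) :
    betaMix mΩ 𝒜 ℬ μ ≤ 1 - μ.real D ^ 2 := by
  have hd_le_one : μ.real D ≤ 1 := measureReal_le_one
  refine Real.sSup_le ?_ (by nlinarith [measureReal_nonneg (μ := μ) (s := D)])
  rintro _ ⟨m, n, A, B, hA, hB, hAd, hBd, hAu, hBu, rfl⟩
  have hsum := sum_abs_measureReal_inter_sub_mul_le_of_atom (fun i => h𝒜 _ (hA i)) hAd hAu
    (fun j => hℬ _ (hB j)) hBd hBu hD (fun i => hatom _ (hA i))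
  simp only [← measureReal_def]
  linarith

end MeasureTheory

/-- If a sub-σ-algebra `ℬ` has an atom `D`, then `β(ℬ,ℬ) ≤ 2(1 - μ D)`. -/
theorem stmt5 {Ω : Type*} [m : MeasurableSpace Ω] (μ : Measure Ω)
    [IsProbabilityMeasure μ] (ℬ : MeasurableSpace Ω) (hℬ : ℬ ≤ m) (D : Set Ω)
    (hD : MeasurableSet[ℬ] D)
    (hatom : ∀ B : Set Ω, MeasurableSet[ℬ] B → μ (B ∩ D) = 0 ∨ μ (D \ B) = 0) :
    betaMix m ℬ ℬ μ ≤ 2 * (1 - (μ D).toReal) := by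
  have hd_nonneg : 0 ≤ μ.real D := measureReal_nonneg
  have hd_le_one : μ.real D ≤ 1 := measureReal_le_one
  calc betaMix m ℬ ℬ μ ≤ 1 - μ.real D ^ 2 :=
        betaMix_le_one_sub_sq_of_atom hℬ hℬ (hℬ _ hD) hatom
    _ ≤ 2 * (1 - μ.real D) := by nlinarith
end

section
/- If 𝒜₁, 𝒜₂ and ℬ₁, ℬ₂ are sub-σ-algebras with the pair of σ-algebras (𝒜₁ ∨ ℬ₁) and (𝒜₂ ∨ ℬ₂) arranged so that 𝒜₁, 𝒜₂ are jointly independent of ℬ₁, ℬ₂ (i.e., σ(𝒜₁ ∪ 𝒜₂) is independent of σ(ℬ₁ ∪ ℬ₂)), then β(𝒜₁ ∨ ℬ₁, 𝒜₂ ∨ ℬ₂) ≤ β(𝒜₁, 𝒜₂) + β(ℬ₁, ℬ₂). -/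
open MeasureTheory

/-!
Finite partitions are encoded by finitely-valued maps, a partition being the family of fibres.
Given such a map `X` for `𝒜₁ ⊔ ℬ₁` and `Y` for `𝒜₂ ⊔ ℬ₂`, approximate `X` in probability by a
function of a pair `(Z₁, W₁)` of finitely-valued `𝒜₁`- and `ℬ₁`-measurable maps (possible because
finite unions of rectangles `A ∩ B` are dense in `𝒜₁ ⊔ ℬ₁`), and `Y` likewise by a function of
`(Z₂, W₂)`. The β-sum moves by at most four times the probability of disagreement and does not
increase under coarsening, so it remains to bound the β-sum of `(Z₁, W₁)` against `(Z₂, W₂)`.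
By independence every cell has probability `μ(Z₁ = a, Z₂ = c) μ(W₁ = b, W₂ = d)`, and
`|x y - p q| ≤ |x - p| y + p |y - q|` splits this β-sum into those of `(Z₁, Z₂)` and `(W₁, W₂)`.
-/

open ProbabilityTheory Set
open scoped symmDiff

lemma preimage_pair_singleton {Ω ι κ : Type*} (X : Ω → ι) (Y : Ω → κ) (p : ι × κ) :
    (fun ω => (X ω, Y ω)) ⁻¹' {p} = X ⁻¹' {p.1} ∩ Y ⁻¹' {p.2} := by
  rw [← singleton_prod_singleton, mk_preimage_prod]

lemma measurableSet_preimage_of_fiber {Ω α : Type*} {_ : MeasurableSpace Ω} [Finite α]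
    {Z : Ω → α} (hZ : ∀ a, MeasurableSet (Z ⁻¹' {a})) (U : Set α) : MeasurableSet (Z ⁻¹' U) := by
  rw [← biUnion_preimage_singleton]
  exact MeasurableSet.biUnion U.to_countable fun a _ => hZ a

lemma measurableSet_preimage_pi_singleton {Ω ι : Type*} {_ : MeasurableSpace Ω} [Countable ι]
    {α : ι → Type*} {Z : ∀ i, Ω → α i} (hZ : ∀ i a, MeasurableSet (Z i ⁻¹' {a}))
    (a : ∀ i, α i) : MeasurableSet ((fun ω i => Z i ω) ⁻¹' {a}) := by
  have h : (fun ω i => Z i ω) ⁻¹' {a} = ⋂ i, Z i ⁻¹' {a i} := by ext; simp [funext_iff]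
  exact h ▸ MeasurableSet.iInter fun i => hZ i _

lemma iUnion_preimage_singleton {Ω ι : Type*} (X : Ω → ι) : ⋃ i, X ⁻¹' {i} = univ := by
  rw [← preimage_iUnion, iUnion_of_singleton, preimage_univ]

lemma exists_preimage_singleton_eq {Ω ι : Type*} {A : ι → Set Ω}
    (hd : Pairwise (Function.onFun Disjoint A)) (hu : ⋃ i, A i = univ) :
    ∃ X : Ω → ι, ∀ i, X ⁻¹' {i} = A i := by
  choose X hX using fun ω => mem_iUnion.1 (hu ▸ mem_univ ω)
  refine ⟨X, fun i => Set.ext fun ω => ⟨fun h => h ▸ hX ω, fun h => ?_⟩⟩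
  by_contra hne
  exact disjoint_left.1 (hd hne) (hX ω) h

lemma measureReal_sub_le_of_sdiff_eq {Ω : Type*} {_ : MeasurableSpace Ω} {μ : Measure Ω}
    [IsFiniteMeasure μ] {S T E : Set Ω} (h : S \ E = T \ E) :
    μ.real S - μ.real T ≤ μ.real (S ∩ E) := by
  have hS : μ.real S ≤ μ.real (S ∩ E) + μ.real (S \ E) := by
    conv_lhs => rw [← inter_union_sdiff S E]
    exact measureReal_union_le _ _
  have hT : μ.real (S \ E) ≤ μ.real T := h ▸ measureReal_mono sdiff_subset
  linarith

lemma abs_measureReal_sub_le_of_sdiff_eq {Ω : Type*} {_ : MeasurableSpace Ω} {μ : Measure Ω}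
    [IsFiniteMeasure μ] {S T E : Set Ω} (h : S \ E = T \ E) :
    |μ.real S - μ.real T| ≤ μ.real (S ∩ E) + μ.real (T ∩ E) :=
  abs_sub_le_iff.2
    ⟨(measureReal_sub_le_of_sdiff_eq h).trans (le_add_of_nonneg_right measureReal_nonneg),
      (measureReal_sub_le_of_sdiff_eq h.symm).trans (le_add_of_nonneg_left measureReal_nonneg)⟩

lemma abs_sub_mul_le_add (a a' p p' : ℝ) {q : ℝ} (hq : 0 ≤ q) :
    |a - p * q| ≤ |a' - p' * q| + |a - a'| + |p - p'| * q :=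
  calc |a - p * q| = |(a' - p' * q) + (a - a') - (p - p') * q| := by ring_nf
    _ ≤ |(a' - p' * q) + (a - a')| + |(p - p') * q| := abs_sub _ _
    _ ≤ |a' - p' * q| + |a - a'| + |p - p'| * q := by
        rw [abs_mul, abs_of_nonneg hq]; gcongr; exact abs_add_le _ _

lemma abs_mul_sub_mul_le {x y p q : ℝ} (hy : 0 ≤ y) (hp : 0 ≤ p) :
    |x * y - p * q| ≤ |x - p| * y + p * |y - q| :=
  calc |x * y - p * q| = |(x - p) * y + p * (y - q)| := by ring_nf
    _ ≤ |x - p| * y + p * |y - q| := by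
        grw [abs_add_le, abs_mul, abs_mul, abs_of_nonneg hy, abs_of_nonneg hp]

lemma sum_abs_mul_sub_mul_le {α β γ δ : Type*} [Fintype α] [Fintype β] [Fintype γ] [Fintype δ]
    (x p : α → γ → ℝ) (y q : β → δ → ℝ) (hy : 0 ≤ y) (hp : 0 ≤ p) :
    ∑ a : α × β, ∑ c : γ × δ, |x a.1 c.1 * y a.2 c.2 - p a.1 c.1 * q a.2 c.2|
      ≤ (∑ a, ∑ c, |x a c - p a c|) * (∑ b, ∑ d, y b d)
        + (∑ a, ∑ c, p a c) * ∑ b, ∑ d, |y b d - q b d| :=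
  calc _ ≤ ∑ a : α × β, ∑ c : γ × δ, (|x a.1 c.1 - p a.1 c.1| * y a.2 c.2
          + p a.1 c.1 * |y a.2 c.2 - q a.2 c.2|) :=
        Finset.sum_le_sum fun a _ => Finset.sum_le_sum fun c _ =>
          abs_mul_sub_mul_le (hy _ _) (hp _ _)
    _ = _ := by
        simp only [Finset.sum_add_distrib, Fintype.sum_prod_type, Finset.sum_mul_sum]

lemma measureReal_preimage_inter_eq_sum {Ω ι : Type*} {_ : MeasurableSpace Ω} {μ : Measure Ω}
    [IsFiniteMeasure μ] {X : Ω → ι} (hX : ∀ i, MeasurableSet (X ⁻¹' {i})) (s : Finset ι)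
    (T : Set Ω) :
    μ.real (X ⁻¹' s ∩ T) = ∑ i ∈ s, μ.real (X ⁻¹' {i} ∩ T) := by
  have hs : MeasurableSet (X ⁻¹' s) := by
    rw [← biUnion_preimage_singleton]; exact s.measurableSet_biUnion fun i _ => hX i
  rw [← measureReal_restrict_apply hs, ← sum_measureReal_preimage_singleton s fun i _ => hX i]
  simp only [measureReal_restrict_apply (hX _)]

section BetaSum

variable {Ω ι κ : Type*} [Fintype ι] [Fintype κ] {m : MeasurableSpace Ω}

-- Twice the total variation distance between the law of `(X, Y)` and the product of the laws.
noncomputable def betaSum (μ : Measure Ω) (X : Ω → ι) (Y : Ω → κ) : ℝ :=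
  ∑ i, ∑ j, |μ.real (X ⁻¹' {i} ∩ Y ⁻¹' {j}) - μ.real (X ⁻¹' {i}) * μ.real (Y ⁻¹' {j})|

lemma sum_measureReal_fiber {ν : Measure Ω} [IsFiniteMeasure ν] {X : Ω → ι}
    (hX : ∀ i, MeasurableSet (X ⁻¹' {i})) : ∑ i, ν.real (X ⁻¹' {i}) = ν.real univ := by
  simpa using sum_measureReal_preimage_singleton Finset.univ fun i _ => hX i

lemma sum_sum_measureReal_fiber_inter {ν : Measure Ω} [IsFiniteMeasure ν] {X : Ω → ι}
    {Y : Ω → κ} (hX : ∀ i, MeasurableSet (X ⁻¹' {i})) (hY : ∀ j, MeasurableSet (Y ⁻¹' {j})) :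
    ∑ i, ∑ j, ν.real (X ⁻¹' {i} ∩ Y ⁻¹' {j}) = ν.real univ := by
  have h := sum_measureReal_fiber (ν := ν) (X := fun ω => (X ω, Y ω))
    fun p => (preimage_pair_singleton X Y p).symm ▸ (hX p.1).inter (hY p.2)
  simpa only [Fintype.sum_prod_type, preimage_pair_singleton] using h

variable {μ : Measure Ω} {X : Ω → ι} {Y : Ω → κ}

lemma betaSum_nonneg : 0 ≤ betaSum μ X Y := by
  unfold betaSum; positivity

lemma betaSum_comm : betaSum μ X Y = betaSum μ Y X := by
  rw [betaSum, betaSum, Finset.sum_comm]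
  simp only [inter_comm, mul_comm]

lemma betaSum_le_two [IsProbabilityMeasure μ] (hX : ∀ i, MeasurableSet (X ⁻¹' {i}))
    (hY : ∀ j, MeasurableSet (Y ⁻¹' {j})) : betaSum μ X Y ≤ 2 := by
  calc betaSum μ X Y
      ≤ ∑ i, ∑ j, (μ.real (X ⁻¹' {i} ∩ Y ⁻¹' {j}) + μ.real (X ⁻¹' {i}) * μ.real (Y ⁻¹' {j})) := by
        refine Finset.sum_le_sum fun i _ => Finset.sum_le_sum fun j _ => ?_
        exact (abs_sub _ _).trans_eq (by rw [abs_of_nonneg (by positivity),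
          abs_of_nonneg (by positivity)])
    _ = 2 := by
        simp only [Finset.sum_add_distrib, ← Finset.sum_mul_sum,
          sum_sum_measureReal_fiber_inter hX hY, sum_measureReal_fiber hX,
          sum_measureReal_fiber hY, probReal_univ]
        norm_num

lemma betaSum_comp_le [IsFiniteMeasure μ] {ι' : Type*} [Fintype ι'] (g : ι → ι')
    (hX : ∀ i, MeasurableSet (X ⁻¹' {i})) : betaSum μ (g ∘ X) Y ≤ betaSum μ X Y := by
  classical
  set d : ι → κ → ℝ := fun i j =>
    μ.real (X ⁻¹' {i} ∩ Y ⁻¹' {j}) - μ.real (X ⁻¹' {i}) * μ.real (Y ⁻¹' {j})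
  have hfiber : ∀ i' j, μ.real ((g ∘ X) ⁻¹' {i'} ∩ Y ⁻¹' {j})
      - μ.real ((g ∘ X) ⁻¹' {i'}) * μ.real (Y ⁻¹' {j}) = ∑ i with g i = i', d i j := by
    intro i' j
    have h : (g ∘ X) ⁻¹' {i'} = X ⁻¹' ↑(Finset.univ.filter fun i => g i = i') := by
      ext; simp
    have hmarg := measureReal_preimage_inter_eq_sum (μ := μ) hX {i | g i = i'} univ
    simp only [inter_univ] at hmarg
    rw [h, measureReal_preimage_inter_eq_sum hX, hmarg, Finset.sum_mul, ← Finset.sum_sub_distrib]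
  calc betaSum μ (g ∘ X) Y = ∑ i', ∑ j, |∑ i with g i = i', d i j| := by
        simp only [betaSum, hfiber]
    _ ≤ ∑ i', ∑ j, ∑ i with g i = i', |d i j| := by
        gcongr with i' _ j _; exact Finset.abs_sum_le_sum_abs _ _
    _ = ∑ i', ∑ i with g i = i', ∑ j, |d i j| := by
        congr! 1 with i'; exact Finset.sum_comm
    _ = betaSum μ X Y := Finset.sum_fiberwise _ _ _

lemma betaSum_comp_comp_le [IsFiniteMeasure μ] {ι' κ' : Type*} [Fintype ι'] [Fintype κ']
    (g : ι → ι') (h : κ → κ') (hX : ∀ i, MeasurableSet (X ⁻¹' {i}))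
    (hY : ∀ j, MeasurableSet (Y ⁻¹' {j})) : betaSum μ (g ∘ X) (h ∘ Y) ≤ betaSum μ X Y := by
  rw [betaSum_comm]
  refine (betaSum_comp_le h hY).trans ?_
  rw [betaSum_comm]
  exact betaSum_comp_le g hX

lemma sum_abs_measureReal_fiber_sub_le [IsFiniteMeasure μ] {X' : Ω → ι}
    (hX : ∀ i, MeasurableSet (X ⁻¹' {i})) (hX' : ∀ i, MeasurableSet (X' ⁻¹' {i})) :
    ∑ i, |μ.real (X ⁻¹' {i}) - μ.real (X' ⁻¹' {i})| ≤ 2 * μ.real {ω | X ω ≠ X' ω} := by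
  set E := {ω | X ω ≠ X' ω}
  have hdiff : ∀ i, X ⁻¹' {i} \ E = X' ⁻¹' {i} \ E := fun i => by
    ext ω
    simp only [mem_sdiff, mem_preimage, mem_singleton_iff, E, mem_ofPred_eq, not_not]
    constructor <;> rintro ⟨rfl, h⟩ <;> exact ⟨by rw [h], h⟩
  calc ∑ i, |μ.real (X ⁻¹' {i}) - μ.real (X' ⁻¹' {i})|
      ≤ ∑ i, ((μ.restrict E).real (X ⁻¹' {i}) + (μ.restrict E).real (X' ⁻¹' {i})) := by
        gcongr with i
        rw [measureReal_restrict_apply (hX i), measureReal_restrict_apply (hX' i)]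
        exact abs_measureReal_sub_le_of_sdiff_eq (hdiff i)
    _ = 2 * μ.real E := by
        rw [Finset.sum_add_distrib, sum_measureReal_fiber hX, sum_measureReal_fiber hX',
          measureReal_restrict_apply_univ]
        ring

lemma betaSum_le_add_of_ne [IsProbabilityMeasure μ] {X' : Ω → ι}
    (hX : ∀ i, MeasurableSet (X ⁻¹' {i})) (hX' : ∀ i, MeasurableSet (X' ⁻¹' {i}))
    (hY : ∀ j, MeasurableSet (Y ⁻¹' {j})) :
    betaSum μ X Y ≤ betaSum μ X' Y + 4 * μ.real {ω | X ω ≠ X' ω} := by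
  have hjoint : ∑ i, ∑ j, |μ.real (X ⁻¹' {i} ∩ Y ⁻¹' {j}) - μ.real (X' ⁻¹' {i} ∩ Y ⁻¹' {j})|
      ≤ 2 * μ.real {ω | X ω ≠ X' ω} := by
    have h := sum_abs_measureReal_fiber_sub_le (μ := μ) (X := fun ω => (X ω, Y ω))
      (X' := fun ω => (X' ω, Y ω))
      (fun p => (preimage_pair_singleton X Y p).symm ▸ (hX p.1).inter (hY p.2))
      (fun p => (preimage_pair_singleton X' Y p).symm ▸ (hX' p.1).inter (hY p.2))
    simpa only [Fintype.sum_prod_type, preimage_pair_singleton, ne_eq, Prod.mk.injEq,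
      and_true] using h
  have hmarg : ∑ i, ∑ j, |μ.real (X ⁻¹' {i}) - μ.real (X' ⁻¹' {i})| * μ.real (Y ⁻¹' {j})
      ≤ 2 * μ.real {ω | X ω ≠ X' ω} := by
    rw [← Finset.sum_mul_sum, sum_measureReal_fiber hY, probReal_univ, mul_one]
    exact sum_abs_measureReal_fiber_sub_le hX hX'
  calc betaSum μ X Y
      ≤ ∑ i, ∑ j, (|μ.real (X' ⁻¹' {i} ∩ Y ⁻¹' {j}) - μ.real (X' ⁻¹' {i}) * μ.real (Y ⁻¹' {j})|
        + |μ.real (X ⁻¹' {i} ∩ Y ⁻¹' {j}) - μ.real (X' ⁻¹' {i} ∩ Y ⁻¹' {j})|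
        + |μ.real (X ⁻¹' {i}) - μ.real (X' ⁻¹' {i})| * μ.real (Y ⁻¹' {j})) :=
        Finset.sum_le_sum fun i _ => Finset.sum_le_sum fun j _ =>
          abs_sub_mul_le_add _ _ _ _ measureReal_nonneg
    _ ≤ betaSum μ X' Y + 4 * μ.real {ω | X ω ≠ X' ω} := by
        simp only [Finset.sum_add_distrib, betaSum]
        linarith

lemma betaSum_le_add_of_ne_of_ne [IsProbabilityMeasure μ] {X' : Ω → ι} {Y' : Ω → κ}
    (hX : ∀ i, MeasurableSet (X ⁻¹' {i})) (hX' : ∀ i, MeasurableSet (X' ⁻¹' {i}))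
    (hY : ∀ j, MeasurableSet (Y ⁻¹' {j})) (hY' : ∀ j, MeasurableSet (Y' ⁻¹' {j})) :
    betaSum μ X Y ≤ betaSum μ X' Y' + 4 * μ.real {ω | X ω ≠ X' ω}
      + 4 * μ.real {ω | Y ω ≠ Y' ω} := by
  have h := betaSum_le_add_of_ne (μ := μ) hY hY' hX'
  rw [betaSum_comm, betaSum_comm (X := Y')] at h
  linarith [betaSum_le_add_of_ne (μ := μ) hX hX' hY]

lemma betaSum_pair_le_of_indep [IsProbabilityMeasure μ] {ι' κ' : Type*} [Fintype ι']
    [Fintype κ'] {𝒜₁ 𝒜₂ ℬ₁ ℬ₂ : MeasurableSpace Ω}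
    (h𝒜₁ : 𝒜₁ ≤ m) (h𝒜₂ : 𝒜₂ ≤ m) (hℬ₁ : ℬ₁ ≤ m) (hℬ₂ : ℬ₂ ≤ m)
    (hindep : Indep (𝒜₁ ⊔ 𝒜₂) (ℬ₁ ⊔ ℬ₂) μ)
    {X₁ : Ω → ι} {X₂ : Ω → ι'} {Y₁ : Ω → κ} {Y₂ : Ω → κ'}
    (hX₁ : ∀ i, MeasurableSet[𝒜₁] (X₁ ⁻¹' {i})) (hX₂ : ∀ i, MeasurableSet[𝒜₂] (X₂ ⁻¹' {i}))
    (hY₁ : ∀ j, MeasurableSet[ℬ₁] (Y₁ ⁻¹' {j})) (hY₂ : ∀ j, MeasurableSet[ℬ₂] (Y₂ ⁻¹' {j})) :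
    betaSum μ (fun ω => (X₁ ω, Y₁ ω)) (fun ω => (X₂ ω, Y₂ ω))
      ≤ betaSum μ X₁ X₂ + betaSum μ Y₁ Y₂ := by
  have hmul : ∀ {A B}, MeasurableSet[𝒜₁ ⊔ 𝒜₂] A → MeasurableSet[ℬ₁ ⊔ ℬ₂] B →
      μ.real (A ∩ B) = μ.real A * μ.real B := fun hA hB => by
    simp only [measureReal_def, (Indep_iff _ _ μ).1 hindep _ _ hA hB, ENNReal.toReal_mul]
  have hX₁' i := le_sup_left (b := 𝒜₂) _ (hX₁ i)
  have hX₂' i := le_sup_right (a := 𝒜₁) _ (hX₂ i)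
  have hY₁' j := le_sup_left (b := ℬ₂) _ (hY₁ j)
  have hY₂' j := le_sup_right (a := ℬ₁) _ (hY₂ j)
  have hterm : ∀ (p : ι × κ) (q : ι' × κ'),
      |μ.real ((fun ω => (X₁ ω, Y₁ ω)) ⁻¹' {p} ∩ (fun ω => (X₂ ω, Y₂ ω)) ⁻¹' {q})
        - μ.real ((fun ω => (X₁ ω, Y₁ ω)) ⁻¹' {p}) * μ.real ((fun ω => (X₂ ω, Y₂ ω)) ⁻¹' {q})|
      = |μ.real (X₁ ⁻¹' {p.1} ∩ X₂ ⁻¹' {q.1}) * μ.real (Y₁ ⁻¹' {p.2} ∩ Y₂ ⁻¹' {q.2})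
        - μ.real (X₁ ⁻¹' {p.1}) * μ.real (X₂ ⁻¹' {q.1})
          * (μ.real (Y₁ ⁻¹' {p.2}) * μ.real (Y₂ ⁻¹' {q.2}))| := by
    intro p q
    rw [preimage_pair_singleton, preimage_pair_singleton, inter_inter_inter_comm,
      hmul ((hX₁' _).inter (hX₂' _)) ((hY₁' _).inter (hY₂' _)), hmul (hX₁' _) (hY₁' _),
      hmul (hX₂' _) (hY₂' _)]
    ring_nf
  calc betaSum μ (fun ω => (X₁ ω, Y₁ ω)) (fun ω => (X₂ ω, Y₂ ω))
      ≤ betaSum μ X₁ X₂ * ∑ j, ∑ j', μ.real (Y₁ ⁻¹' {j} ∩ Y₂ ⁻¹' {j'})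
        + (∑ i, ∑ i', μ.real (X₁ ⁻¹' {i}) * μ.real (X₂ ⁻¹' {i'})) * betaSum μ Y₁ Y₂ := by
        simp only [betaSum, hterm]
        exact sum_abs_mul_sub_mul_le (fun i i' => μ.real (X₁ ⁻¹' {i} ∩ X₂ ⁻¹' {i'}))
          (fun i i' => μ.real (X₁ ⁻¹' {i}) * μ.real (X₂ ⁻¹' {i'}))
          (fun j j' => μ.real (Y₁ ⁻¹' {j} ∩ Y₂ ⁻¹' {j'}))
          (fun j j' => μ.real (Y₁ ⁻¹' {j}) * μ.real (Y₂ ⁻¹' {j'}))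
          (fun _ _ => measureReal_nonneg)
          (fun _ _ => mul_nonneg measureReal_nonneg measureReal_nonneg)
    _ = betaSum μ X₁ X₂ + betaSum μ Y₁ Y₂ := by
        rw [sum_sum_measureReal_fiber_inter (fun j => hℬ₁ _ (hY₁ j)) (fun j => hℬ₂ _ (hY₂ j)),
          ← Finset.sum_mul_sum, sum_measureReal_fiber (fun i => h𝒜₁ _ (hX₁ i)),
          sum_measureReal_fiber (fun i => h𝒜₂ _ (hX₂ i)), probReal_univ]
        ring

end BetaSum

section BetaMix

variable {Ω ι κ : Type*} [Fintype ι] [Fintype κ] {m : MeasurableSpace Ω} {μ : Measure Ω}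
  {𝒜 ℬ : MeasurableSpace Ω} {X : Ω → ι} {Y : Ω → κ}

lemma half_betaSum_mem_betaSet (hX : ∀ i, MeasurableSet[𝒜] (X ⁻¹' {i}))
    (hY : ∀ j, MeasurableSet[ℬ] (Y ⁻¹' {j})) : 1 / 2 * betaSum μ X Y ∈ betaSet m 𝒜 ℬ μ := by
  classical
  let e := (Fintype.equivFin ι).symm
  let e' := (Fintype.equivFin κ).symm
  refine ⟨_, _, fun i => X ⁻¹' {e i}, fun j => Y ⁻¹' {e' j}, fun i => hX _, fun j => hY _,
    fun i i' h => (disjoint_singleton.2 (e.injective.ne h)).preimage X,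
    fun j j' h => (disjoint_singleton.2 (e'.injective.ne h)).preimage Y,
    by rw [e.surjective.iUnion_comp fun i => X ⁻¹' {i}, iUnion_preimage_singleton],
    by rw [e'.surjective.iUnion_comp fun j => Y ⁻¹' {j}, iUnion_preimage_singleton], ?_⟩
  rw [betaSum, ← e.sum_comp]
  simp only [← e'.sum_comp, measureReal_def]

lemma exists_eq_half_betaSum_of_mem_betaSet {x : ℝ} (hx : x ∈ betaSet m 𝒜 ℬ μ) :
    ∃ (M N : ℕ) (X : Ω → Fin M) (Y : Ω → Fin N), (∀ i, MeasurableSet[𝒜] (X ⁻¹' {i})) ∧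
      (∀ j, MeasurableSet[ℬ] (Y ⁻¹' {j})) ∧ x = 1 / 2 * betaSum μ X Y := by
  obtain ⟨M, N, A, B, hA, hB, hdA, hdB, huA, huB, rfl⟩ := hx
  obtain ⟨X, hX⟩ := exists_preimage_singleton_eq hdA huA
  obtain ⟨Y, hY⟩ := exists_preimage_singleton_eq hdB huB
  exact ⟨M, N, X, Y, fun i => hX i ▸ hA i, fun j => hY j ▸ hB j,
    by simp only [betaSum, hX, hY, measureReal_def]⟩

variable [IsProbabilityMeasure μ]

lemma betaSet_bddAbove (h𝒜 : 𝒜 ≤ m) (hℬ : ℬ ≤ m) : BddAbove (betaSet m 𝒜 ℬ μ) := by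
  refine ⟨1, fun x hx => ?_⟩
  obtain ⟨M, N, X, Y, hX, hY, rfl⟩ := exists_eq_half_betaSum_of_mem_betaSet hx
  linarith [betaSum_le_two (μ := μ) (fun i => h𝒜 _ (hX i)) (fun j => hℬ _ (hY j))]

lemma half_betaSum_le_betaMix (h𝒜 : 𝒜 ≤ m) (hℬ : ℬ ≤ m)
    (hX : ∀ i, MeasurableSet[𝒜] (X ⁻¹' {i})) (hY : ∀ j, MeasurableSet[ℬ] (Y ⁻¹' {j})) :
    1 / 2 * betaSum μ X Y ≤ betaMix m 𝒜 ℬ μ :=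
  le_csSup (betaSet_bddAbove h𝒜 hℬ) (half_betaSum_mem_betaSet hX hY)

lemma betaMix_nonneg (h𝒜 : 𝒜 ≤ m) (hℬ : ℬ ≤ m) : 0 ≤ betaMix m 𝒜 ℬ μ :=
  (mul_nonneg (by norm_num) betaSum_nonneg).trans
    (half_betaSum_le_betaMix (X := fun _ => ()) (Y := fun _ => ()) h𝒜 hℬ (fun _ => by simp)
      (fun _ => by simp))

end BetaMix

section Approximation

variable {Ω : Type*} {𝒜 ℬ : MeasurableSpace Ω}

-- The algebra of finite unions of rectangles `A ∩ B` with `A ∈ 𝒜` and `B ∈ ℬ`, each member being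
-- presented through finite partitions of `𝒜` and of `ℬ` that determine it.
def rectAlgebra (𝒜 ℬ : MeasurableSpace Ω) : Set (Set Ω) :=
  {T | ∃ (α β : Type) (_ : Fintype α) (_ : Fintype β) (Z : Ω → α) (W : Ω → β)
    (U : Set (α × β)), (∀ a, MeasurableSet[𝒜] (Z ⁻¹' {a})) ∧
      (∀ b, MeasurableSet[ℬ] (W ⁻¹' {b})) ∧ T = (fun ω => (Z ω, W ω)) ⁻¹' U}

lemma setOf_mem_rectAlgebra (op : Prop → Prop → Prop) {S T : Set Ω}
    (hS : S ∈ rectAlgebra 𝒜 ℬ) (hT : T ∈ rectAlgebra 𝒜 ℬ) :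
    {ω | op (ω ∈ S) (ω ∈ T)} ∈ rectAlgebra 𝒜 ℬ := by
  obtain ⟨α, β, _, _, Z, W, U, hZ, hW, rfl⟩ := hS
  obtain ⟨α', β', _, _, Z', W', U', hZ', hW', rfl⟩ := hT
  refine ⟨α × α', β × β', inferInstance, inferInstance, fun ω => (Z ω, Z' ω),
    fun ω => (W ω, W' ω), {p | op ((p.1.1, p.2.1) ∈ U) ((p.1.2, p.2.2) ∈ U')},
    fun a => ?_, fun b => ?_, rfl⟩
  · rw [preimage_pair_singleton]; exact (hZ _).inter (hZ' _)
  · rw [preimage_pair_singleton]; exact (hW _).inter (hW' _)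

lemma univ_mem_rectAlgebra : univ ∈ rectAlgebra 𝒜 ℬ :=
  ⟨Unit, Unit, inferInstance, inferInstance, fun _ => (), fun _ => (), univ,
    fun _ => by simp, fun _ => by simp, rfl⟩

lemma isSetRing_rectAlgebra : IsSetRing (rectAlgebra 𝒜 ℬ) where
  empty_mem := by
    simpa using setOf_mem_rectAlgebra (fun _ _ => False) univ_mem_rectAlgebra
      univ_mem_rectAlgebra
  union_mem _ _ hS hT := setOf_mem_rectAlgebra (· ∨ ·) hS hT
  sdiff_mem _ _ hS hT := setOf_mem_rectAlgebra (fun p q => p ∧ ¬q) hS hT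

lemma inter_mem_rectAlgebra {A B : Set Ω} (hA : MeasurableSet[𝒜] A)
    (hB : MeasurableSet[ℬ] B) : A ∩ B ∈ rectAlgebra 𝒜 ℬ := by
  classical
  have hdecide : ∀ {n : MeasurableSpace Ω} {C : Set Ω}, MeasurableSet[n] C →
      ∀ b, MeasurableSet[n] ((fun ω => decide (ω ∈ C)) ⁻¹' {b}) := fun hC b => by
    cases b
    · simpa [preimage, ← compl_ofPred] using hC.compl
    · simpa [preimage] using hC
  exact ⟨Bool, Bool, inferInstance, inferInstance, fun ω => decide (ω ∈ A),
    fun ω => decide (ω ∈ B), {(true, true)}, hdecide hA, hdecide hB, by ext; simp⟩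

lemma generateFrom_rectAlgebra : MeasurableSpace.generateFrom (rectAlgebra 𝒜 ℬ) = 𝒜 ⊔ ℬ := by
  refine le_antisymm (MeasurableSpace.generateFrom_le ?_) (sup_le (fun A hA => ?_) fun B hB => ?_)
  · rintro _ ⟨α, β, _, _, Z, W, U, hZ, hW, rfl⟩
    refine measurableSet_preimage_of_fiber (fun p => ?_) U
    rw [preimage_pair_singleton]
    exact (le_sup_left (b := ℬ) _ (hZ _)).inter (le_sup_right (a := 𝒜) _ (hW _))
  · exact MeasurableSpace.measurableSet_generateFrom <| by
      simpa using inter_mem_rectAlgebra (ℬ := ℬ) hA MeasurableSet.univ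
  · exact MeasurableSpace.measurableSet_generateFrom <| by
      simpa using inter_mem_rectAlgebra (𝒜 := 𝒜) MeasurableSet.univ hB

lemma exists_mem_rectAlgebra_measureReal_symmDiff_lt {m : MeasurableSpace Ω} {μ : Measure Ω}
    [IsFiniteMeasure μ] (h𝒜 : 𝒜 ≤ m) (hℬ : ℬ ≤ m) {S : Set Ω} (hS : MeasurableSet[𝒜 ⊔ ℬ] S) {ε : ℝ}
    (hε : 0 < ε) : ∃ T ∈ rectAlgebra 𝒜 ℬ, μ.real (T ∆ S) < ε := by
  have hle := sup_le h𝒜 hℬ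
  obtain ⟨T, hT, hlt⟩ := exists_measure_symmDiff_lt_of_generateFrom_isSetRing (mα := 𝒜 ⊔ ℬ)
    (μ := μ.trim hle) isSetRing_rectAlgebra ⟨{univ}, countable_singleton _,
      singleton_subset_iff.2 univ_mem_rectAlgebra, by simp⟩
    generateFrom_rectAlgebra.symm hS (ENNReal.ofReal_pos.2 hε)
  have hTm : MeasurableSet[𝒜 ⊔ ℬ] T :=
    generateFrom_rectAlgebra (𝒜 := 𝒜) ▸ MeasurableSpace.measurableSet_generateFrom hT
  rw [trim_measurableSet_eq hle (hTm.symmDiff hS)] at hlt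
  exact ⟨T, hT, ENNReal.toReal_lt_of_lt_ofReal hlt⟩

lemma exists_measureReal_ne_comp_pair_lt {ι : Type} [Fintype ι] {m : MeasurableSpace Ω}
    {μ : Measure[m] Ω} [IsProbabilityMeasure μ] (h𝒜 : 𝒜 ≤ m) (hℬ : ℬ ≤ m) {X : Ω → ι}
    (hX : ∀ i, MeasurableSet[𝒜 ⊔ ℬ] (X ⁻¹' {i})) {ε : ℝ} (hε : 0 < ε) :
    ∃ (α β : Type) (_ : Fintype α) (_ : Fintype β) (Z : Ω → α) (W : Ω → β) (g : α × β → ι),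
      (∀ a, MeasurableSet[𝒜] (Z ⁻¹' {a})) ∧ (∀ b, MeasurableSet[ℬ] (W ⁻¹' {b})) ∧
      μ.real {ω | X ω ≠ g (Z ω, W ω)} < ε := by
  classical
  have : Nonempty Ω := nonempty_of_isProbabilityMeasure μ
  have : Nonempty ι := ⟨X (Classical.arbitrary Ω)⟩
  have hcard : (0 : ℝ) < Fintype.card ι := by exact_mod_cast Fintype.card_pos
  choose T hT hTX using fun i =>
    exists_mem_rectAlgebra_measureReal_symmDiff_lt (μ := μ) h𝒜 hℬ (hX i) (div_pos hε hcard)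
  choose α β _ _ Z W U hZ hW hTeq using hT
  have hmemT : ∀ i ω, ω ∈ T i ↔ (Z i ω, W i ω) ∈ U i := fun i ω => by rw [hTeq i]; rfl
  let g : (∀ i, α i) × (∀ i, β i) → ι := fun p =>
    if h : ∃ i, (p.1 i, p.2 i) ∈ U i then h.choose else Classical.arbitrary ι
  have hsub : {ω | X ω ≠ g (fun i => Z i ω, fun i => W i ω)} ⊆ ⋃ i, T i ∆ (X ⁻¹' {i}) := by
    intro ω hω
    by_cases h : ∃ i, (Z i ω, W i ω) ∈ U i
    · have hg : g (fun i => Z i ω, fun i => W i ω) = h.choose := dif_pos h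
      exact mem_iUnion.2 ⟨h.choose,
        Or.inl ⟨(hmemT _ ω).2 h.choose_spec, fun hXω => hω (hXω.trans hg.symm)⟩⟩
    · exact mem_iUnion.2 ⟨X ω, Or.inr ⟨rfl, fun hT => h ⟨X ω, (hmemT _ ω).1 hT⟩⟩⟩
  refine ⟨∀ i, α i, ∀ i, β i, inferInstance, inferInstance, fun ω i => Z i ω,
    fun ω i => W i ω, g, measurableSet_preimage_pi_singleton hZ,
    measurableSet_preimage_pi_singleton hW, ?_⟩
  calc μ.real {ω | X ω ≠ g (fun i => Z i ω, fun i => W i ω)}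
      ≤ ∑ i, μ.real (T i ∆ (X ⁻¹' {i})) :=
        (measureReal_mono hsub).trans (measureReal_iUnion_fintype_le _)
    _ < ∑ _i : ι, ε / Fintype.card ι := Finset.sum_lt_sum_of_nonempty Finset.univ_nonempty
        fun i _ => hTX i
    _ = ε := by rw [Finset.sum_const, Finset.card_univ, nsmul_eq_mul]; field_simp

end Approximation

/-- If `σ(𝒜₁ ∪ 𝒜₂)` is independent of `σ(ℬ₁ ∪ ℬ₂)`, then
`β(𝒜₁ ⊔ ℬ₁, 𝒜₂ ⊔ ℬ₂) ≤ β(𝒜₁, 𝒜₂) + β(ℬ₁, ℬ₂)`. -/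
theorem stmt6 {Ω : Type*} [m : MeasurableSpace Ω] (μ : Measure Ω)
    [IsProbabilityMeasure μ] (𝒜₁ 𝒜₂ ℬ₁ ℬ₂ : MeasurableSpace Ω)
    (h𝒜₁ : 𝒜₁ ≤ m) (h𝒜₂ : 𝒜₂ ≤ m) (hℬ₁ : ℬ₁ ≤ m) (hℬ₂ : ℬ₂ ≤ m)
    (hindep : ProbabilityTheory.Indep (𝒜₁ ⊔ 𝒜₂) (ℬ₁ ⊔ ℬ₂) μ) :
    betaMix m (𝒜₁ ⊔ ℬ₁) (𝒜₂ ⊔ ℬ₂) μ ≤ betaMix m 𝒜₁ 𝒜₂ μ + betaMix m ℬ₁ ℬ₂ μ := by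
  refine Real.sSup_le (fun x hx => ?_)
    (add_nonneg (betaMix_nonneg h𝒜₁ h𝒜₂) (betaMix_nonneg hℬ₁ hℬ₂))
  obtain ⟨M, N, X, Y, hX, hY, rfl⟩ := exists_eq_half_betaSum_of_mem_betaSet hx
  refine le_of_forall_pos_le_add fun ε hε => ?_
  obtain ⟨α₁, β₁, _, _, Z₁, W₁, g₁, hZ₁, hW₁, hXε⟩ :=
    exists_measureReal_ne_comp_pair_lt (μ := μ) h𝒜₁ hℬ₁ hX (div_pos hε four_pos)
  obtain ⟨α₂, β₂, _, _, Z₂, W₂, g₂, hZ₂, hW₂, hYε⟩ :=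
    exists_measureReal_ne_comp_pair_lt (μ := μ) h𝒜₂ hℬ₂ hY (div_pos hε four_pos)
  have hpair₁ p := preimage_pair_singleton Z₁ W₁ p ▸ (h𝒜₁ _ (hZ₁ p.1)).inter (hℬ₁ _ (hW₁ p.2))
  have hpair₂ p := preimage_pair_singleton Z₂ W₂ p ▸ (h𝒜₂ _ (hZ₂ p.1)).inter (hℬ₂ _ (hW₂ p.2))
  have hperturb := betaSum_le_add_of_ne_of_ne (μ := μ)
    (X' := g₁ ∘ fun ω => (Z₁ ω, W₁ ω)) (Y' := g₂ ∘ fun ω => (Z₂ ω, W₂ ω))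
    (fun i => sup_le h𝒜₁ hℬ₁ _ (hX i))
    (fun i => measurableSet_preimage_of_fiber hpair₁ (g₁ ⁻¹' {i}))
    (fun j => sup_le h𝒜₂ hℬ₂ _ (hY j))
    (fun j => measurableSet_preimage_of_fiber hpair₂ (g₂ ⁻¹' {j}))
  have hrefine := betaSum_comp_comp_le (μ := μ) g₁ g₂ hpair₁ hpair₂
  have hsplit := betaSum_pair_le_of_indep h𝒜₁ h𝒜₂ hℬ₁ hℬ₂ hindep hZ₁ hZ₂ hW₁ hW₂
  have h𝒜 := half_betaSum_le_betaMix (μ := μ) h𝒜₁ h𝒜₂ hZ₁ hZ₂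
  have hℬ := half_betaSum_le_betaMix (μ := μ) hℬ₁ hℬ₂ hW₁ hW₂
  simp only [Function.comp_apply] at hperturb
  linarith
end

section
/- If g is measurable (not necessarily integrable) and T is measure preserving, then for any sequence a_n → ∞ of positive reals, a_n^{-1} S_n(g − g∘T) converges to 0 in probability (in measure), where S_n(f) = Σ_{j=0}^{n−1} f∘T^j. -/
/-!
The coboundary sums telescope: `S_n(g - g∘T) = g - g∘Tⁿ`. Since `a_n → ∞`, `a_n⁻¹ g → 0`
pointwise, hence in measure; and `a_n⁻¹ g∘Tⁿ` has the same distribution as `a_n⁻¹ g` because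
`Tⁿ` preserves `μ`, so it tends to `0` in measure as well.
-/

open MeasureTheory Filter ENNReal

theorem Finset.sum_range_sub_comp_iterate {α G : Type*} [AddCommGroup G] (T : α → α)
    (g : α → G) (n : ℕ) (x : α) :
    ∑ j ∈ Finset.range n, (g (T^[j] x) - g (T (T^[j] x))) = g x - g (T^[n] x) := by
  simp only [← Function.iterate_succ_apply' T]
  exact Finset.sum_range_sub' (fun j => g (T^[j] x)) n

namespace MeasureTheory.TendstoInMeasure

variable {α ι E : Type*} [MeasurableSpace α] {μ : Measure α} {l : Filter ι}

theorem sub [SeminormedAddCommGroup E] {f h : ι → α → E} {g k : α → E}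
    (hf : TendstoInMeasure μ f l g) (hh : TendstoInMeasure μ h l k) :
    TendstoInMeasure μ (fun i x => f i x - h i x) l (fun x => g x - k x) := by
  rw [tendstoInMeasure_iff_enorm] at hf hh ⊢
  intro ε hε hε_top
  have hε₂ : 0 < ε / 2 := ENNReal.half_pos hε.ne'
  have hε₂_top : ε / 2 ≠ ∞ := ENNReal.div_ne_top hε_top two_ne_zero
  have hsum := (hf _ hε₂ hε₂_top).add (hh _ hε₂ hε₂_top)
  rw [add_zero] at hsum
  refine tendsto_of_tendsto_of_tendsto_of_le_of_le tendsto_const_nhds hsum (fun _ => zero_le)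
    fun i => (measure_mono fun x hx => ?_).trans (measure_union_le _ _)
  by_contra hx'
  simp only [Set.mem_union, Set.mem_ofPred_eq, not_or, not_le] at hx hx'
  have htri : ‖f i x - h i x - (g x - k x)‖ₑ ≤ ‖f i x - g x‖ₑ + ‖h i x - k x‖ₑ := by
    rw [sub_sub_sub_comm]
    exact enorm_sub_le
  exact (hx.trans htri).not_gt (by simpa [ENNReal.add_halves] using ENNReal.add_lt_add hx'.1 hx'.2)

theorem comp_measurePreserving {β : Type*} [MeasurableSpace β] {ν : Measure β} [EDist E]
    {f : ι → β → E} {c : E} (hf : TendstoInMeasure ν f l fun _ => c) {T : ι → α → β}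
    (hT : ∀ i, MeasurePreserving (T i) μ ν) :
    TendstoInMeasure μ (fun i x => f i (T i x)) l fun _ => c := by
  intro ε hε
  refine tendsto_of_tendsto_of_tendsto_of_le_of_le tendsto_const_nhds (hf ε hε)
    (fun _ => zero_le) fun i => ?_
  calc μ {x | ε ≤ edist (f i (T i x)) c}
      = μ (T i ⁻¹' {y | ε ≤ edist (f i y) c}) := rfl
    _ ≤ μ.map (T i) {y | ε ≤ edist (f i y) c} := Measure.le_map_apply (hT i).aemeasurable _
    _ = ν {y | ε ≤ edist (f i y) c} := by rw [(hT i).map_eq]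

end MeasureTheory.TendstoInMeasure

theorem stmt8_general {Ω : Type*} [MeasurableSpace Ω] (μ : Measure Ω) [IsProbabilityMeasure μ]
    (T : Ω → Ω) (hT : MeasurePreserving T μ μ) (g : Ω → ℝ) (hg : Measurable g)
    (a : ℕ → ℝ) (ha' : Tendsto a atTop atTop) :
    TendstoInMeasure μ
      (fun n ω => (a n)⁻¹ * ∑ j ∈ Finset.range n, (g (T^[j] ω) - g (T (T^[j] ω))))
      atTop (fun _ => (0 : ℝ)) := by
  have hg_scaled : TendstoInMeasure μ (fun n ω => (a n)⁻¹ * g ω) atTop fun _ => 0 :=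
    tendstoInMeasure_of_tendsto_ae (fun n => (hg.const_mul _).aestronglyMeasurable)
      (ae_of_all _ fun ω => by simpa using ha'.inv_tendsto_atTop.mul_const (g ω))
  have hg_iterate : TendstoInMeasure μ (fun n ω => (a n)⁻¹ * g (T^[n] ω)) atTop fun _ => 0 :=
    hg_scaled.comp_measurePreserving hT.iterate
  simpa only [Finset.sum_range_sub_comp_iterate, mul_sub, sub_zero] using hg_scaled.sub hg_iterate

/-- If `T` is measure preserving, `g` measurable, and `a_n → ∞` with `a_n > 0`, then
`a_n⁻¹ S_n(g - g∘T) → 0` in probability. -/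
theorem stmt8 {Ω : Type*} [MeasurableSpace Ω] (μ : Measure Ω) [IsProbabilityMeasure μ]
    (T : Ω → Ω) (hT : MeasurePreserving T μ μ) (g : Ω → ℝ) (hg : Measurable g)
    (a : ℕ → ℝ) (ha : ∀ n, 0 < a n) (ha' : Tendsto a atTop atTop) :
    TendstoInMeasure μ
      (fun n ω => (a n)⁻¹ * ∑ j ∈ Finset.range n, (g (T^[j] ω) - g (T (T^[j] ω))))
      atTop (fun _ => (0 : ℝ)) :=
  stmt8_general μ T hT g hg a ha'
end

section
/- If g ∈ L²(μ) and T is measure preserving, then n^{-1/2} max_{0 ≤ k ≤ n} |S_k(g − g∘T)| → 0 in probability, where S_k(f) = Σ_{j=0}^{k−1} f∘T^j and S_0 = 0. -/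
/-!
`S_k(g - g ∘ T) = g - g ∘ T^k` telescopes, so if the maximum is at least `ε √n` then
`|g ∘ T^k| ≥ ε √n / 2` for some `k ≤ n`. By a union bound and invariance of `μ` this has
probability at most `(n + 1) μ(|g| ≥ ε √n / 2)`, which is `o(1)` because
`t² μ(|g| ≥ t) ≤ ∫_{|g| ≥ t} g² → 0` for `g ∈ L²`.
-/

open MeasureTheory Filter
open scoped ENNReal Topology

theorem sum_range_sub_apply_iterate {α G : Type*} [AddCommGroup G] (g : α → G) (T : α → α)
    (k : ℕ) (x : α) :
    ∑ j ∈ Finset.range k, (g (T^[j] x) - g (T (T^[j] x))) = g x - g (T^[k] x) := by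
  simp_rw [← Function.iterate_succ_apply' T]
  exact Finset.sum_range_sub' (fun j => g (T^[j] x)) k

theorem exists_half_le_abs_of_le_sup'_abs_sub {ι : Type*} {s : Finset ι} (hs : s.Nonempty)
    {i : ι} (hi : i ∈ s) (a : ι → ℝ) {c : ℝ} (hc : c ≤ s.sup' hs fun k => |a i - a k|) :
    ∃ k ∈ s, c / 2 ≤ |a k| := by
  obtain ⟨k, hk, hck⟩ := (Finset.le_sup'_iff hs).1 hc
  have := abs_sub (a i) (a k)
  by_cases h : c / 2 ≤ |a i|
  · exact ⟨i, hi, h⟩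
  · exact ⟨k, hk, by linarith⟩

theorem setOf_le_abs_rpow_mul_sup'_subset_biUnion_preimage_iterate {α : Type*} (g : α → ℝ)
    (T : α → α) {n : ℕ} (hn : 0 < n) (ε : ℝ) :
    {x | ε ≤ |(n : ℝ) ^ (-(1/2 : ℝ)) *
        (Finset.range (n + 1)).sup' Finset.nonempty_range_add_one (fun k => |g x - g (T^[k] x)|)|}
      ⊆ ⋃ k ∈ Finset.range (n + 1), T^[k] ⁻¹' {x | ε / 2 * √n ≤ |g x|} := by
  intro x hx
  have hsqrt : 0 < √(n : ℝ) := Real.sqrt_pos.2 (Nat.cast_pos.2 hn)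
  have hsup : 0 ≤ (Finset.range (n + 1)).sup' Finset.nonempty_range_add_one
      (fun k => |g x - g (T^[k] x)|) :=
    Finset.le_sup'_of_le _ (Finset.mem_range.2 n.succ_pos) (abs_nonneg _)
  rw [Set.mem_ofPred_eq, Real.rpow_neg (Nat.cast_nonneg n), ← Real.sqrt_eq_rpow,
    abs_of_nonneg (by positivity), inv_mul_eq_div, le_div_iff₀ hsqrt] at hx
  obtain ⟨k, hk, hgk⟩ := exists_half_le_abs_of_le_sup'_abs_sub _
    (Finset.mem_range.2 n.succ_pos) (fun k => g (T^[k] x)) hx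
  exact Set.mem_biUnion hk (by rwa [div_mul_eq_mul_div])

theorem MeasureTheory.MeasurePreserving.measure_biUnion_preimage_iterate_le {α : Type*}
    [MeasurableSpace α] {μ : Measure α} {T : α → α} (hT : MeasurePreserving T μ μ)
    (s : Finset ℕ) (A : Set α) : μ (⋃ k ∈ s, T^[k] ⁻¹' A) ≤ s.card * μ A := by
  refine (measure_biUnion_finset_le s _).trans ?_
  simpa using Finset.sum_le_card_nsmul s _ _ fun k _ => (hT.iterate k).measure_preimage_le A

namespace MeasureTheory.MemLp

variable {α : Type*} [MeasurableSpace α] {μ : Measure α} {f : α → ℝ}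

theorem tendsto_sq_mul_measure_le_abs (hf : MemLp f 2 μ) :
    Tendsto (fun t : ℝ => ENNReal.ofReal (t ^ 2) * μ {x | t ≤ |f x|}) atTop (𝓝 0) := by
  set F : α → ℝ≥0∞ := fun x => ENNReal.ofReal (f x ^ 2)
  have hS : ∀ t : ℝ, NullMeasurableSet {x | t ≤ |f x|} μ := fun t =>
    nullMeasurableSet_le aemeasurable_const hf.1.aemeasurable.abs
  have tail : Tendsto (fun t : ℝ => ∫⁻ x, {x | t ≤ |f x|}.indicator F x ∂μ) atTop (𝓝 0) := by
    simpa using tendsto_lintegral_filter_of_dominated_convergence' (f := 0) F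
      (.of_forall fun t => hf.integrable_sq.aemeasurable.ennreal_ofReal.indicator₀ (hS t))
      (.of_forall fun t => ae_of_all _ (Set.indicator_le_self _ _))
      hf.integrable_sq.lintegral_lt_top.ne
      (ae_of_all _ fun x => tendsto_const_nhds.congr' <| (eventually_gt_atTop |f x|).mono
        fun t ht => (Set.indicator_of_notMem (s := {x | t ≤ |f x|}) (not_le.2 ht) F).symm)
  refine tendsto_of_tendsto_of_tendsto_of_le_of_le' tendsto_const_nhds tail
    (.of_forall fun _ => zero_le) ?_
  filter_upwards [eventually_ge_atTop 0] with t ht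
  rw [← lintegral_indicator_const₀ (hS t)]
  refine lintegral_mono fun x => Set.indicator_le_indicator' fun hx => ?_
  exact ENNReal.ofReal_le_ofReal (sq_abs (f x) ▸ pow_le_pow_left₀ ht hx 2)

theorem tendsto_natCast_mul_measure_le_abs (hf : MemLp f 2 μ) {c : ℝ} (hc : 0 < c) :
    Tendsto (fun n : ℕ => (n : ℝ≥0∞) * μ {x | c * √n ≤ |f x|}) atTop (𝓝 0) := by
  have hlim : Tendsto (fun n : ℕ => c * √n) atTop atTop :=
    (Real.tendsto_sqrt_atTop.comp tendsto_natCast_atTop_atTop).const_mul_atTop hc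
  have hc2 : ENNReal.ofReal (c ^ 2) ≠ 0 := by positivity
  have := ENNReal.Tendsto.const_mul (hf.tendsto_sq_mul_measure_le_abs.comp hlim)
    (Or.inr (ENNReal.inv_ne_top.2 hc2))
  rw [mul_zero] at this
  refine this.congr fun n => ?_
  rw [Function.comp_apply, mul_pow, Real.sq_sqrt (Nat.cast_nonneg n),
    ENNReal.ofReal_mul (sq_nonneg c), ENNReal.ofReal_natCast, ← mul_assoc, ← mul_assoc,
    ENNReal.inv_mul_cancel hc2 ENNReal.ofReal_ne_top, one_mul]

end MeasureTheory.MemLp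

theorem stmt9_general {Ω : Type*} [MeasurableSpace Ω] (μ : Measure Ω)
    (T : Ω → Ω) (hT : MeasurePreserving T μ μ)
    (g : Ω → ℝ) (hg2 : MemLp g 2 μ) :
    TendstoInMeasure μ
      (fun (n : ℕ) ω => (n : ℝ) ^ (-(1/2 : ℝ)) *
        (Finset.range (n + 1)).sup' Finset.nonempty_range_add_one
          (fun k => |∑ j ∈ Finset.range k, (g (T^[j] ω) - g (T (T^[j] ω)))|))
      atTop (fun _ => (0 : ℝ)) := by
  simp_rw [tendstoInMeasure_iff_dist, sum_range_sub_apply_iterate, Real.dist_0_eq_abs]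
  intro ε hε
  have bound := ENNReal.Tendsto.const_mul (a := 2)
    (hg2.tendsto_natCast_mul_measure_le_abs (half_pos hε)) (Or.inr ENNReal.ofNat_ne_top)
  rw [mul_zero] at bound
  refine tendsto_of_tendsto_of_tendsto_of_le_of_le' tendsto_const_nhds bound
    (.of_forall fun _ => zero_le) ?_
  filter_upwards [eventually_gt_atTop 0] with n hn
  calc _ ≤ μ (⋃ k ∈ Finset.range (n + 1), T^[k] ⁻¹' {ω | ε / 2 * √n ≤ |g ω|}) :=
        measure_mono (setOf_le_abs_rpow_mul_sup'_subset_biUnion_preimage_iterate g T hn ε)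
    _ ≤ ((n + 1 : ℕ) : ℝ≥0∞) * μ {ω | ε / 2 * √n ≤ |g ω|} :=
        (hT.measure_biUnion_preimage_iterate_le _ _).trans_eq (by rw [Finset.card_range])
    _ ≤ 2 * ((n : ℝ≥0∞) * μ {ω | ε / 2 * √n ≤ |g ω|}) := by
        rw [← mul_assoc]; gcongr; norm_cast; omega

/-- If `g ∈ L²(μ)` and `T` is measure preserving, then
`n^{-1/2} max_{0 ≤ k ≤ n} |S_k(g - g∘T)| → 0` in probability. -/
theorem stmt9 {Ω : Type*} [MeasurableSpace Ω] (μ : Measure Ω) [IsProbabilityMeasure μ]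
    (T : Ω → Ω) (hT : MeasurePreserving T μ μ) (hTbij : Function.Bijective T)
    (g : Ω → ℝ) (hg : Measurable g) (hg2 : MemLp g 2 μ) :
    TendstoInMeasure μ
      (fun (n : ℕ) ω => (n : ℝ) ^ (-(1/2 : ℝ)) *
        (Finset.range (n + 1)).sup' Finset.nonempty_range_add_one
          (fun k => |∑ j ∈ Finset.range k, (g (T^[j] ω) - g (T (T^[j] ω)))|))
      atTop (fun _ => (0 : ℝ)) :=
  stmt9_general μ T hT g hg2
end

section
/- Let p be a positive integer and X_1, ..., X_t independent random variables with values in [0,1] almost surely, and X := Σ_{j=1}^t X_j. Then E[X^p] ≤ B_p · max{E[X], (E[X])^p}, where B_p is the p-th Bell number defined by B_0 = B_1 = 1 and B_{p+1} = Σ_{k=0}^p C(p,k) B_k. -/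
/-!
Write `S = ∑ⱼ Xⱼ` and `m = E[S]`. Splitting `S^(r+1) = ∑ⱼ Xⱼ S^r` and using `Xⱼ ≤ 1`,
`Xⱼ S^r ≤ Xⱼ (1 + S₋ⱼ)^r`, where `S₋ⱼ = S - Xⱼ` is independent of `Xⱼ`. Hence
`E[S^(r+1)] ≤ m E[(1 + S)^r] = m ∑ₖ C(r,k) E[S^k]`. This is the Bell recursion with an extra
factor `m`, and an induction on the moments turns it into `E[S^p] ≤ B_p max(m, m^p)`.
-/

open MeasureTheory ProbabilityTheory Finset

section Bell

variable {B : ℕ → ℝ}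

lemma nonneg_of_bell_recursion (hB0 : 0 ≤ B 0)
    (hBrec : ∀ p : ℕ, B (p + 1) = ∑ k ∈ range (p + 1), (p.choose k : ℝ) * B k) (n : ℕ) :
    0 ≤ B n := by
  induction n using Nat.strong_induction_on with
  | _ n ih =>
    cases n with
    | zero => exact hB0
    | succ n =>
      rw [hBrec n]
      exact sum_nonneg fun k hk => mul_nonneg (Nat.cast_nonneg _) (ih k (by simpa using hk))

lemma mul_max_pow_le_max_pow {m : ℝ} (hm : 0 ≤ m) {i r : ℕ} (hr : 1 ≤ r) (hi : i ≤ r) :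
    m * max m (m ^ i) ≤ max m (m ^ (r + 1)) := by
  rcases le_total m 1 with hm1 | hm1
  · calc m * max m (m ^ i) ≤ m * 1 :=
          mul_le_mul_of_nonneg_left (max_le hm1 (pow_le_one₀ hm hm1)) hm
      _ ≤ max m (m ^ (r + 1)) := by simp
  · calc m * max m (m ^ i) ≤ m * m ^ r :=
          mul_le_mul_of_nonneg_left
            (max_le (le_self_pow₀ hm1 (by omega)) (pow_le_pow_right₀ hm1 hi)) hm
      _ = m ^ (r + 1) := (pow_succ' m r).symm
      _ ≤ max m (m ^ (r + 1)) := le_max_right _ _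

lemma le_bell_mul_max_of_le_mul_sum_choose {a : ℕ → ℝ} {m : ℝ} (hm : 0 ≤ m) (ha0 : a 0 ≤ 1)
    (ha : ∀ r : ℕ, a (r + 1) ≤ m * ∑ k ∈ range (r + 1), (r.choose k : ℝ) * a k)
    (hB0 : B 0 = 1) (hB1 : B 1 = 1)
    (hBrec : ∀ p : ℕ, B (p + 1) = ∑ k ∈ range (p + 1), (p.choose k : ℝ) * B k) (n : ℕ) :
    a n ≤ B n * max m (m ^ n) := by
  induction n using Nat.strong_induction_on with
  | _ n ih =>
    match n, ih with
    | 0, _ => simpa [hB0] using ha0.trans (le_max_right m 1)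
    -- treated apart because `max m (m ^ 0) = max m 1` breaks `mul_max_pow_le_max_pow` at `r = 0`
    | 1, _ => simpa [hB1] using (ha 0).trans (by simpa using mul_le_of_le_one_right hm ha0)
    | r + 2, ih =>
      have hBnn := nonneg_of_bell_recursion (hB0 ▸ zero_le_one) hBrec
      calc a (r + 2) ≤ m * ∑ k ∈ range (r + 2), ((r + 1).choose k : ℝ) * a k := ha (r + 1)
        _ ≤ m * ∑ k ∈ range (r + 2), ((r + 1).choose k : ℝ) * (B k * max m (m ^ k)) := by
          gcongr with k hk
          exact ih k (by simpa using hk)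
        _ = ∑ k ∈ range (r + 2), ((r + 1).choose k : ℝ) * B k * (m * max m (m ^ k)) := by
          rw [mul_sum]
          exact sum_congr rfl fun k _ => by ring
        _ ≤ ∑ k ∈ range (r + 2), ((r + 1).choose k : ℝ) * B k * max m (m ^ (r + 2)) := by
          gcongr with k hk
          · exact mul_nonneg (Nat.cast_nonneg _) (hBnn k)
          · exact mul_max_pow_le_max_pow hm (by omega) (by simpa [Nat.lt_succ_iff] using hk)
        _ = B (r + 2) * max m (m ^ (r + 2)) := by rw [← sum_mul, hBrec (r + 1)]

end Bell

section Moments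

variable {Ω : Type*} [MeasurableSpace Ω] {μ : Measure Ω}

lemma integrable_comp_of_ae_mem_Icc [IsFiniteMeasure μ] {f : Ω → ℝ} {g : ℝ → ℝ}
    (hf : AEStronglyMeasurable f μ) (hg : Continuous g) {a b : ℝ}
    (hab : ∀ᵐ ω ∂μ, f ω ∈ Set.Icc a b) : Integrable (fun ω => g (f ω)) μ := by
  obtain ⟨C, hC⟩ := isCompact_Icc.exists_bound_of_continuousOn hg.continuousOn
  exact .of_bound (hg.comp_aestronglyMeasurable hf) C (hab.mono fun ω hω => hC _ hω)

lemma integral_add_one_pow {f : Ω → ℝ} (hf : ∀ k : ℕ, Integrable (fun ω => f ω ^ k) μ)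
    (r : ℕ) :
    ∫ ω, (f ω + 1) ^ r ∂μ = ∑ k ∈ range (r + 1), (r.choose k : ℝ) * ∫ ω, f ω ^ k ∂μ := by
  simp_rw [add_pow, one_pow, mul_one]
  rw [integral_finsetSum _ fun k _ => (hf k).mul_const _]
  exact sum_congr rfl fun k _ => by rw [integral_mul_const, mul_comm]

lemma integral_mul_add_pow_le_of_indepFun {Y Z : Ω → ℝ} (hY : AEStronglyMeasurable Y μ)
    (hYZ : IndepFun Y Z μ) (hY01 : ∀ᵐ ω ∂μ, Y ω ∈ Set.Icc 0 1) (hZ : ∀ᵐ ω ∂μ, 0 ≤ Z ω) {r : ℕ}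
    (hZint : Integrable (fun ω => (Z ω + 1) ^ r) μ) :
    ∫ ω, Y ω * (Y ω + Z ω) ^ r ∂μ ≤ (∫ ω, Y ω ∂μ) * ∫ ω, (Z ω + 1) ^ r ∂μ := by
  have hYZ' : IndepFun Y (fun ω => (Z ω + 1) ^ r) μ :=
    hYZ.comp measurable_id (by fun_prop : Measurable fun z : ℝ => (z + 1) ^ r)
  calc ∫ ω, Y ω * (Y ω + Z ω) ^ r ∂μ ≤ ∫ ω, Y ω * (Z ω + 1) ^ r ∂μ := by
        refine integral_mono_of_nonneg ?_ ?_ ?_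
        · filter_upwards [hY01, hZ] with ω hYω hZω
          exact mul_nonneg hYω.1 (pow_nonneg (add_nonneg hYω.1 hZω) r)
        · refine hZint.bdd_mul hY (c := 1) ?_
          filter_upwards [hY01] with ω hω
          rw [Real.norm_eq_abs, abs_le]
          constructor <;> linarith [hω.1, hω.2]
        · filter_upwards [hY01, hZ] with ω hYω hZω
          exact mul_le_mul_of_nonneg_left
            (pow_le_pow_left₀ (add_nonneg hYω.1 hZω) (by linarith [hYω.2]) r) hYω.1
    _ = (∫ ω, Y ω ∂μ) * ∫ ω, (Z ω + 1) ^ r ∂μ :=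
        hYZ'.integral_fun_mul_eq_mul_integral hY hZint.aestronglyMeasurable

variable {ι : Type*} [Fintype ι] {X : ι → Ω → ℝ}

lemma ae_sum_mem_Icc (hX : ∀ j, ∀ᵐ ω ∂μ, X j ω ∈ Set.Icc (0 : ℝ) 1) (s : Finset ι) :
    ∀ᵐ ω ∂μ, ∑ i ∈ s, X i ω ∈ Set.Icc (0 : ℝ) #s := by
  filter_upwards [ae_all_iff.2 hX] with ω hω
  exact ⟨sum_nonneg fun i _ => (hω i).1, by simpa using sum_le_sum fun i (_ : i ∈ s) => (hω i).2⟩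

lemma integral_sum_pow_succ_le [IsFiniteMeasure μ] (hmeas : ∀ j, Measurable (X j))
    (hindep : iIndepFun X μ) (hX : ∀ j, ∀ᵐ ω ∂μ, X j ω ∈ Set.Icc (0 : ℝ) 1) (r : ℕ) :
    ∫ ω, (∑ j, X j ω) ^ (r + 1) ∂μ ≤
      (∫ ω, ∑ j, X j ω ∂μ) * ∫ ω, (∑ j, X j ω + 1) ^ r ∂μ := by
  classical
  have hint : ∀ (s : Finset ι) {g : ℝ → ℝ}, Continuous g →
      Integrable (fun ω => g (∑ i ∈ s, X i ω)) μ := fun s _ hg =>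
    integrable_comp_of_ae_mem_Icc (s.measurable_sum fun i _ => hmeas i).aestronglyMeasurable hg
      (ae_sum_mem_Icc hX s)
  have hterm : ∀ j, ∫ ω, X j ω * (∑ i, X i ω) ^ r ∂μ ≤
      (∫ ω, X j ω ∂μ) * ∫ ω, (∑ i, X i ω + 1) ^ r ∂μ := by
    intro j
    set s := univ.erase j
    have hsplit : ∀ ω, ∑ i, X i ω = X j ω + ∑ i ∈ s, X i ω := fun ω =>
      (add_sum_erase _ _ (mem_univ j)).symm
    have hindep_j : IndepFun (X j) (fun ω => ∑ i ∈ s, X i ω) μ := by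
      simpa only [Finset.sum_fn] using
        (hindep.indepFun_finsetSum_of_notMem hmeas (notMem_erase j univ)).symm
    have hs_le : ∀ᵐ ω ∂μ, 0 ≤ ∑ i ∈ s, X i ω := (ae_sum_mem_Icc hX s).mono fun _ h => h.1
    calc ∫ ω, X j ω * (∑ i, X i ω) ^ r ∂μ = ∫ ω, X j ω * (X j ω + ∑ i ∈ s, X i ω) ^ r ∂μ := by
          simp_rw [← hsplit]
      _ ≤ (∫ ω, X j ω ∂μ) * ∫ ω, (∑ i ∈ s, X i ω + 1) ^ r ∂μ := by
          exact integral_mul_add_pow_le_of_indepFun (hmeas j).aestronglyMeasurable hindep_j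
            (hX j) hs_le (hint s (g := fun x => (x + 1) ^ r) (by fun_prop))
      _ ≤ (∫ ω, X j ω ∂μ) * ∫ ω, (∑ i, X i ω + 1) ^ r ∂μ := by
          refine mul_le_mul_of_nonneg_left ?_ (integral_nonneg_of_ae ((hX j).mono fun _ h => h.1))
          refine integral_mono_ae (hint s (g := fun x => (x + 1) ^ r) (by fun_prop))
            (hint univ (g := fun x => (x + 1) ^ r) (by fun_prop)) ?_
          filter_upwards [ae_all_iff.2 hX, hs_le] with ω hω hsω
          gcongr (?_ + 1) ^ r
          exact sum_le_sum_of_subset_of_nonneg (subset_univ s) fun i _ _ => (hω i).1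
  calc ∫ ω, (∑ j, X j ω) ^ (r + 1) ∂μ = ∑ j, ∫ ω, X j ω * (∑ i, X i ω) ^ r ∂μ := by
        simp_rw [pow_succ', sum_mul]
        refine integral_finsetSum _ fun j _ => (hint univ (continuous_pow r)).bdd_mul
          (hmeas j).aestronglyMeasurable (c := 1) ?_
        filter_upwards [hX j] with ω hω
        rw [Real.norm_eq_abs, abs_le]
        constructor <;> linarith [hω.1, hω.2]
    _ ≤ ∑ j, (∫ ω, X j ω ∂μ) * ∫ ω, (∑ i, X i ω + 1) ^ r ∂μ := sum_le_sum fun j _ => hterm j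
    _ = (∫ ω, ∑ j, X j ω ∂μ) * ∫ ω, (∑ j, X j ω + 1) ^ r ∂μ := by
        rw [← sum_mul, integral_finsetSum _ fun j _ => by simpa using hint {j} continuous_id]

end Moments

theorem stmt10_general {Ω : Type*} [MeasurableSpace Ω] (μ : Measure Ω)
    [IsProbabilityMeasure μ] (t : ℕ) (X : Fin t → Ω → ℝ)
    (hmeas : ∀ j, Measurable (X j))
    (hindep : iIndepFun X μ)
    (hbdd : ∀ j, ∀ᵐ ω ∂μ, X j ω ∈ Set.Icc (0 : ℝ) 1)
    (B : ℕ → ℝ) (hB0 : B 0 = 1) (hB1 : B 1 = 1)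
    (hBrec : ∀ p : ℕ, B (p + 1) = ∑ k ∈ Finset.range (p + 1), (p.choose k : ℝ) * B k)
    (p : ℕ) :
    ∫ ω, (∑ j, X j ω) ^ p ∂μ ≤
      B p * max (∫ ω, ∑ j, X j ω ∂μ) ((∫ ω, ∑ j, X j ω ∂μ) ^ p) := by
  have hS := ae_sum_mem_Icc hbdd univ
  have hSint : ∀ k : ℕ, Integrable (fun ω => (∑ j, X j ω) ^ k) μ := fun k =>
    integrable_comp_of_ae_mem_Icc (univ.measurable_sum fun j _ => hmeas j).aestronglyMeasurable
      (continuous_pow k) hS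
  refine le_bell_mul_max_of_le_mul_sum_choose (a := fun k => ∫ ω, (∑ j, X j ω) ^ k ∂μ)
    (integral_nonneg_of_ae (hS.mono fun _ h => h.1)) (by simp) (fun r => ?_) hB0 hB1 hBrec p
  rw [← integral_add_one_pow hSint]
  exact integral_sum_pow_succ_le hmeas hindep hbdd r

/-- Berend–Tassa: if `X₁, …, X_t` are independent `[0,1]`-valued random variables
and `X = ∑ Xⱼ`, then `E[Xᵖ] ≤ B_p · max (E X) ((E X)ᵖ)` where `B_p` is the `p`-th
Bell number. -/
theorem stmt10 {Ω : Type*} [MeasurableSpace Ω] (μ : Measure Ω)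
    [IsProbabilityMeasure μ] (t : ℕ) (X : Fin t → Ω → ℝ)
    (hmeas : ∀ j, Measurable (X j))
    (hindep : iIndepFun X μ)
    (hbdd : ∀ j, ∀ᵐ ω ∂μ, X j ω ∈ Set.Icc (0 : ℝ) 1)
    (B : ℕ → ℝ) (hB0 : B 0 = 1) (hB1 : B 1 = 1)
    (hBrec : ∀ p : ℕ, B (p + 1) = ∑ k ∈ Finset.range (p + 1), (p.choose k : ℝ) * B k)
    (p : ℕ) (hp : 0 < p) :
    ∫ ω, (∑ j, X j ω) ^ p ∂μ ≤
      B p * max (∫ ω, ∑ j, X j ω ∂μ) ((∫ ω, ∑ j, X j ω ∂μ) ^ p) :=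
  stmt10_general μ t X hmeas hindep hbdd B hB0 hB1 hBrec p
end

section
/- Let e be a random variable with μ{e = 1} = μ{e = −1} = 1/(2n²) and μ{e = 0} = 1 − 1/n², let T be measure preserving with (e∘T^i)_{i∈ℤ} i.i.d., and set h := Σ_{i=0}^{n−1} e∘T^{−i} − Σ_{i=0}^{n−1} e∘T^{−(n+i)}. Then for every positive integer p, E[|h|^p] ≤ 2·B_p / n, where B_p is the p-th Bell number. -/
open MeasureTheory ProbabilityTheory
open scoped ENNReal

/-!
Bound `|h|` by `S = ∑_{k < 2n} X k` with `X k = |e ∘ T^{-k}|`: these are independent,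
`{0,1}`-valued and of mean `1/n²`. Splitting a summand `X i` off `S` and using `X i ∈ {0,1}` gives
`E[X i S^p] = ∑_k C(p,k) E[X i] E[S_{≠i}^k]`, hence `E[S^{p+1}] ≤ (2/n) ∑_k C(p,k) E[S^k]`.
Since `2/n ≤ 1` and `E[S^0] = 1 = B_0`, comparing with the Bell recurrence gives
`E[S^p] ≤ (2/n) B_p` for `p ≥ 1`.
-/

open Finset

lemma one_le_of_bell_recurrence {B : ℕ → ℝ} (hB0 : B 0 = 1)
    (hBrec : ∀ p : ℕ, B (p + 1) = ∑ k ∈ range (p + 1), (p.choose k : ℝ) * B k) (p : ℕ) :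
    1 ≤ B p := by
  induction p using Nat.strong_induction_on with
  | _ p ih =>
    rcases p with _ | p
    · exact hB0.ge
    · have hterm_nonneg : ∀ k ∈ range (p + 1), 0 ≤ (p.choose k : ℝ) * B k :=
        fun k hk => mul_nonneg (Nat.cast_nonneg _) (zero_le_one.trans (ih k (mem_range.1 hk)))
      calc (1 : ℝ) = (p.choose 0 : ℝ) * B 0 := by simp [hB0]
        _ ≤ ∑ k ∈ range (p + 1), (p.choose k : ℝ) * B k :=
          single_le_sum hterm_nonneg (mem_range.2 p.succ_pos)
        _ = B (p + 1) := (hBrec p).symm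

lemma le_mul_of_bell_recurrence {B M : ℕ → ℝ} {c : ℝ} (hc0 : 0 ≤ c) (hc1 : c ≤ 1)
    (hB0 : B 0 = 1)
    (hBrec : ∀ p : ℕ, B (p + 1) = ∑ k ∈ range (p + 1), (p.choose k : ℝ) * B k)
    (hM0 : M 0 = 1)
    (hM : ∀ p : ℕ, M (p + 1) ≤ c * ∑ k ∈ range (p + 1), (p.choose k : ℝ) * M k)
    {p : ℕ} (hp : 0 < p) : M p ≤ c * B p := by
  induction p using Nat.strong_induction_on with
  | _ p ih =>
    obtain ⟨p, rfl⟩ := Nat.exists_eq_add_one_of_ne_zero hp.ne'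
    have hMB : ∀ k < p + 1, M k ≤ B k := by
      intro k hk
      rcases k.eq_zero_or_pos with rfl | hk0
      · rw [hM0, hB0]
      · exact (ih k hk hk0).trans
          (mul_le_of_le_one_left (zero_le_one.trans (one_le_of_bell_recurrence hB0 hBrec k)) hc1)
    calc M (p + 1) ≤ c * ∑ k ∈ range (p + 1), (p.choose k : ℝ) * M k := hM p
      _ ≤ c * ∑ k ∈ range (p + 1), (p.choose k : ℝ) * B k := by
        gcongr with k hk
        exact hMB k (mem_range.1 hk)
      _ = c * B (p + 1) := by rw [hBrec]

section ZeroOneSums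

variable {Ω ι : Type*} [MeasurableSpace Ω] {μ : Measure Ω} {X : ι → Ω → ℝ}

lemma ae_forall_mem_Icc_of_zero_or_one (hX01 : ∀ i, ∀ᵐ ω ∂μ, X i ω = 0 ∨ X i ω = 1)
    (s : Finset ι) : ∀ᵐ ω ∂μ, ∀ i ∈ s, X i ω ∈ Set.Icc 0 1 := by
  filter_upwards [(Filter.eventually_all_finset s).2 fun i _ => hX01 i] with ω hω i hi
  rcases hω i hi with h | h <;> simp [h]

lemma ae_sum_nonneg_and_le_card (hX01 : ∀ i, ∀ᵐ ω ∂μ, X i ω = 0 ∨ X i ω = 1)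
    (s : Finset ι) : ∀ᵐ ω ∂μ, 0 ≤ ∑ i ∈ s, X i ω ∧ ∑ i ∈ s, X i ω ≤ #s := by
  filter_upwards [ae_forall_mem_Icc_of_zero_or_one hX01 s] with ω hω
  refine ⟨sum_nonneg fun i hi => (hω i hi).1, ?_⟩
  simpa using sum_le_sum fun i hi => (hω i hi).2

lemma integral_mul_sum_pow_le (hX : ∀ i, AEMeasurable (X i) μ)
    (hX01 : ∀ i, ∀ᵐ ω ∂μ, X i ω = 0 ∨ X i ω = 1) (hindep : iIndepFun X μ) {q : ℝ}
    (hmean : ∀ i, ∫ ω, X i ω ∂μ ≤ q) {i : ι} {s : Finset ι} (hi : i ∉ s) (k : ℕ) :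
    ∫ ω, X i ω * (∑ j ∈ s, X j ω) ^ k ∂μ ≤ q * ∫ ω, (∑ j ∈ s, X j ω) ^ k ∂μ := by
  have hsum : AEMeasurable (fun ω => ∑ j ∈ s, X j ω) μ := s.aemeasurable_fun_sum fun j _ => hX j
  have hind : IndepFun (X i) (fun ω => (∑ j ∈ s, X j ω) ^ k) μ := by
    simpa [Function.comp_def, Finset.sum_apply] using
      (hindep.indepFun_finsetSum_of_notMem₀ hX hi).symm.comp measurable_id
        (measurable_id.pow_const k)
  have hmoment_nonneg : 0 ≤ ∫ ω, (∑ j ∈ s, X j ω) ^ k ∂μ := by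
    refine integral_nonneg_of_ae ?_
    filter_upwards [ae_sum_nonneg_and_le_card hX01 s] with ω h using pow_nonneg h.1 k
  calc ∫ ω, X i ω * (∑ j ∈ s, X j ω) ^ k ∂μ
      = (∫ ω, X i ω ∂μ) * ∫ ω, (∑ j ∈ s, X j ω) ^ k ∂μ :=
        hind.integral_mul_eq_mul_integral (hX i).aestronglyMeasurable
          (hsum.pow_const k).aestronglyMeasurable
    _ ≤ q * ∫ ω, (∑ j ∈ s, X j ω) ^ k ∂μ := by gcongr; exact hmean i

lemma mul_sum_pow_ae_eq [DecidableEq ι] (hX01 : ∀ i, ∀ᵐ ω ∂μ, X i ω = 0 ∨ X i ω = 1)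
    {i : ι} {t : Finset ι} (hi : i ∈ t) (p : ℕ) :
    (fun ω => X i ω * (∑ j ∈ t, X j ω) ^ p) =ᵐ[μ] fun ω =>
      ∑ k ∈ range (p + 1), (p.choose k : ℝ) * (X i ω * (∑ j ∈ t.erase i, X j ω) ^ k) := by
  filter_upwards [hX01 i] with ω h
  have hsplit : ∑ j ∈ t, X j ω = ∑ j ∈ t.erase i, X j ω + X i ω := (sum_erase_add t _ hi).symm
  rw [hsplit]
  rcases h with h | h
  · simp [h]
  · rw [h, add_pow, one_mul]
    exact sum_congr rfl fun k _ => by ring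

variable [IsProbabilityMeasure μ]

lemma integrable_sum_pow (hX : ∀ i, AEMeasurable (X i) μ)
    (hX01 : ∀ i, ∀ᵐ ω ∂μ, X i ω = 0 ∨ X i ω = 1) (s : Finset ι) (k : ℕ) :
    Integrable (fun ω => (∑ i ∈ s, X i ω) ^ k) μ := by
  refine .of_bound ((s.aemeasurable_fun_sum fun i _ => hX i).pow_const k).aestronglyMeasurable
    (#s ^ k) ?_
  filter_upwards [ae_sum_nonneg_and_le_card hX01 s] with ω ⟨h0, hle⟩
  rw [norm_pow, Real.norm_of_nonneg h0]
  exact pow_le_pow_left₀ h0 hle k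

lemma integrable_mul_sum_pow (hX : ∀ i, AEMeasurable (X i) μ)
    (hX01 : ∀ i, ∀ᵐ ω ∂μ, X i ω = 0 ∨ X i ω = 1) (i : ι) (s : Finset ι) (k : ℕ) :
    Integrable (fun ω => X i ω * (∑ j ∈ s, X j ω) ^ k) μ := by
  refine (integrable_sum_pow hX hX01 s k).bdd_mul (c := 1) (hX i).aestronglyMeasurable ?_
  filter_upwards [hX01 i] with ω h
  rcases h with h | h <;> simp [h]

lemma integral_sum_pow_mono (hX : ∀ i, AEMeasurable (X i) μ)
    (hX01 : ∀ i, ∀ᵐ ω ∂μ, X i ω = 0 ∨ X i ω = 1) {s t : Finset ι} (hst : s ⊆ t) (k : ℕ) :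
    ∫ ω, (∑ i ∈ s, X i ω) ^ k ∂μ ≤ ∫ ω, (∑ i ∈ t, X i ω) ^ k ∂μ := by
  refine integral_mono_ae (integrable_sum_pow hX hX01 s k) (integrable_sum_pow hX hX01 t k) ?_
  filter_upwards [ae_forall_mem_Icc_of_zero_or_one hX01 t] with ω hω
  have hsum : ∑ i ∈ s, X i ω ≤ ∑ i ∈ t, X i ω :=
    sum_le_sum_of_subset_of_nonneg hst fun i hi _ => (hω i hi).1
  exact pow_le_pow_left₀ (sum_nonneg fun i hi => (hω i (hst hi)).1) hsum k

lemma integral_sum_pow_succ_le_s11 (hX : ∀ i, AEMeasurable (X i) μ)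
    (hX01 : ∀ i, ∀ᵐ ω ∂μ, X i ω = 0 ∨ X i ω = 1) (hindep : iIndepFun X μ) {q : ℝ} (hq : 0 ≤ q)
    (hmean : ∀ i, ∫ ω, X i ω ∂μ ≤ q) (t : Finset ι) (p : ℕ) :
    ∫ ω, (∑ i ∈ t, X i ω) ^ (p + 1) ∂μ ≤
      #t * q * ∑ k ∈ range (p + 1), (p.choose k : ℝ) * ∫ ω, (∑ i ∈ t, X i ω) ^ k ∂μ := by
  classical
  have hterm : ∀ i ∈ t, ∫ ω, X i ω * (∑ j ∈ t, X j ω) ^ p ∂μ ≤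
      q * ∑ k ∈ range (p + 1), (p.choose k : ℝ) * ∫ ω, (∑ j ∈ t, X j ω) ^ k ∂μ := by
    intro i hi
    rw [integral_congr_ae (mul_sum_pow_ae_eq hX01 hi p), mul_sum,
      integral_finsetSum _ fun k _ => (integrable_mul_sum_pow hX hX01 i _ k).const_mul _]
    gcongr with k
    rw [integral_const_mul, mul_left_comm]
    gcongr
    calc ∫ ω, X i ω * (∑ j ∈ t.erase i, X j ω) ^ k ∂μ
        ≤ q * ∫ ω, (∑ j ∈ t.erase i, X j ω) ^ k ∂μ :=
          integral_mul_sum_pow_le hX hX01 hindep hmean (notMem_erase i t) k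
      _ ≤ q * ∫ ω, (∑ j ∈ t, X j ω) ^ k ∂μ :=
          mul_le_mul_of_nonneg_left (integral_sum_pow_mono hX hX01 (erase_subset i t) k) hq
  calc ∫ ω, (∑ i ∈ t, X i ω) ^ (p + 1) ∂μ
      = ∑ i ∈ t, ∫ ω, X i ω * (∑ j ∈ t, X j ω) ^ p ∂μ := by
        simp_rw [pow_succ', sum_mul]
        exact integral_finsetSum t fun i _ => integrable_mul_sum_pow hX hX01 i t p
    _ ≤ ∑ _i ∈ t, q * ∑ k ∈ range (p + 1), (p.choose k : ℝ) * ∫ ω, (∑ j ∈ t, X j ω) ^ k ∂μ :=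
        sum_le_sum hterm
    _ = _ := by rw [sum_const, nsmul_eq_mul, mul_assoc]

lemma integral_sum_pow_le_mul_bell (hX : ∀ i, AEMeasurable (X i) μ)
    (hX01 : ∀ i, ∀ᵐ ω ∂μ, X i ω = 0 ∨ X i ω = 1) (hindep : iIndepFun X μ) {q : ℝ} (hq : 0 ≤ q)
    (hmean : ∀ i, ∫ ω, X i ω ∂μ ≤ q) {t : Finset ι} (htq : #t * q ≤ 1) {B : ℕ → ℝ}
    (hB0 : B 0 = 1)
    (hBrec : ∀ p : ℕ, B (p + 1) = ∑ k ∈ range (p + 1), (p.choose k : ℝ) * B k)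
    {p : ℕ} (hp : 0 < p) :
    ∫ ω, (∑ i ∈ t, X i ω) ^ p ∂μ ≤ #t * q * B p :=
  le_mul_of_bell_recurrence (M := fun k => ∫ ω, (∑ i ∈ t, X i ω) ^ k ∂μ) (by positivity) htq
    hB0 hBrec (by simp) (integral_sum_pow_succ_le_s11 hX hX01 hindep hq hmean t) hp

end ZeroOneSums

section ThreePointLaw

variable {Ω : Type*} [MeasurableSpace Ω] {μ : Measure Ω}

lemma ae_mem_of_sum_measure_preimage_eq_one [IsProbabilityMeasure μ] {β : Type*}
    [MeasurableSpace β] [MeasurableSingletonClass β] {f : Ω → β} (hf : AEMeasurable f μ)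
    (s : Finset β) (hs : ∑ x ∈ s, μ (f ⁻¹' {x}) = 1) : ∀ᵐ ω ∂μ, f ω ∈ s := by
  have hmap : μ.map f s = 1 := by
    rw [← sum_measure_singleton]
    simpa [Measure.map_apply_of_aemeasurable hf (measurableSet_singleton _)] using hs
  have : IsProbabilityMeasure (μ.map f) := Measure.isProbabilityMeasure_map hf
  refine ae_of_ae_map hf (?_ : ∀ᵐ y ∂μ.map f, y ∈ (s : Set β))
  rw [ae_mem_iff_measure_eq s.measurableSet.nullMeasurableSet, hmap, measure_univ]

lemma integral_eq_measureReal_ne_zero {Y : Ω → ℝ} (hY : AEMeasurable Y μ)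
    (hY01 : ∀ᵐ ω ∂μ, Y ω = 0 ∨ Y ω = 1) : ∫ ω, Y ω ∂μ = μ.real {ω | Y ω ≠ 0} := by
  have hind : Y =ᵐ[μ] {ω | Y ω ≠ 0}.indicator 1 := by
    filter_upwards [hY01] with ω h
    rcases h with h | h <;> simp [h]
  have hnull : NullMeasurableSet {ω | Y ω ≠ 0} μ :=
    hY.nullMeasurable (measurableSet_singleton 0).compl
  rw [integral_congr_ae hind, integral_indicator₀ hnull, Pi.one_def, setIntegral_const,
    smul_eq_mul, mul_one]

lemma abs_ae_eq_zero_or_one_of_three_point [IsProbabilityMeasure μ] {e : Ω → ℝ}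
    (he : AEMeasurable e μ) {x : ℝ≥0∞} (hx : 1 ≤ x) (h1 : μ {ω | e ω = 1} = 1 / (2 * x))
    (hm1 : μ {ω | e ω = -1} = 1 / (2 * x)) (h0 : μ {ω | e ω = 0} = 1 - 1 / x) :
    ∀ᵐ ω ∂μ, |e ω| = 0 ∨ |e ω| = 1 := by
  have hhalves : 1 / (2 * x) + 1 / (2 * x) = 1 / x := by
    rw [ENNReal.div_add_div_same, one_add_one_eq_two, ← mul_one (2 : ℝ≥0∞), mul_assoc,
      ENNReal.mul_div_mul_left _ _ two_ne_zero ENNReal.ofNat_ne_top, one_mul]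
  have hmass : ∑ y ∈ ({1, -1, 0} : Finset ℝ), μ (e ⁻¹' {y}) = 1 := by
    rw [sum_insert (by norm_num), sum_pair (by norm_num)]
    change μ {ω | e ω = 1} + (μ {ω | e ω = -1} + μ {ω | e ω = 0}) = 1
    rw [h1, hm1, h0, ← add_assoc, hhalves,
      add_tsub_cancel_of_le (ENNReal.div_le_of_le_mul (by simpa using hx))]
  filter_upwards [ae_mem_of_sum_measure_preimage_eq_one he _ hmass] with ω h
  simp only [Finset.mem_insert, Finset.mem_singleton] at h
  rcases h with h | h | h <;> simp [h]

lemma integral_abs_eq_of_measure_eq_zero [IsProbabilityMeasure μ] {e : Ω → ℝ}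
    (he : AEMeasurable e μ) (he01 : ∀ᵐ ω ∂μ, |e ω| = 0 ∨ |e ω| = 1) {a : ℝ≥0∞} (ha : a ≤ 1)
    (h0 : μ {ω | e ω = 0} = 1 - a) : ∫ ω, |e ω| ∂μ = a.toReal := by
  have hsupp : {ω | |e ω| ≠ 0} = {ω | e ω = 0}ᶜ := by ext; simp
  have hnull : NullMeasurableSet {ω | e ω = 0} μ := he.nullMeasurable (measurableSet_singleton 0)
  rw [integral_eq_measureReal_ne_zero he.abs he01, hsupp, measureReal_def,
    prob_compl_eq_one_sub₀ hnull, h0, ENNReal.sub_sub_cancel ENNReal.one_ne_top ha]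

end ThreePointLaw

lemma abs_sum_sub_sum_shift_le (a : ℕ → ℝ) (n : ℕ) :
    |∑ i ∈ range n, a i - ∑ i ∈ range n, a (n + i)| ≤ ∑ i ∈ range (2 * n), |a i| := by
  rw [two_mul, sum_range_add]
  calc |∑ i ∈ range n, a i - ∑ i ∈ range n, a (n + i)|
      ≤ |∑ i ∈ range n, a i| + |∑ i ∈ range n, a (n + i)| := abs_sub _ _
    _ ≤ ∑ i ∈ range n, |a i| + ∑ i ∈ range n, |a (n + i)| :=
      add_le_add (abs_sum_le_sum_abs _ _) (abs_sum_le_sum_abs _ _)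

theorem stmt11_general {Ω : Type*} [MeasurableSpace Ω] (μ : Measure Ω)
    [IsProbabilityMeasure μ] (T : Equiv.Perm Ω)
    (n : ℕ) (hn : 2 ≤ n) (e : Ω → ℝ)
    (h1 : μ {ω | e ω = 1} = 1 / (2 * (n : ℝ≥0∞) ^ 2))
    (hm1 : μ {ω | e ω = -1} = 1 / (2 * (n : ℝ≥0∞) ^ 2))
    (h0 : μ {ω | e ω = 0} = 1 - 1 / (n : ℝ≥0∞) ^ 2)
    (hindep : iIndepFun
      (fun (i : ℤ) ω => e ((T ^ i) ω)) μ)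
    (hident : ∀ i : ℤ, IdentDistrib (fun ω => e ((T ^ i) ω)) e μ μ)
    (h : Ω → ℝ)
    (hdef : h = fun ω => (∑ i ∈ Finset.range n, e ((T ^ (-(i : ℤ))) ω))
      - ∑ i ∈ Finset.range n, e ((T ^ (-((n : ℤ) + i))) ω))
    (B : ℕ → ℝ) (hB0 : B 0 = 1)
    (hBrec : ∀ p : ℕ, B (p + 1) = ∑ k ∈ Finset.range (p + 1), (p.choose k : ℝ) * B k)
    (p : ℕ) (hp : 0 < p) :
    ∫ ω, |h ω| ^ p ∂μ ≤ 2 * B p / n := by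
  have he : AEMeasurable e μ := (hident 0).aemeasurable_snd
  have hn2 : (1 : ℝ≥0∞) ≤ (n : ℝ≥0∞) ^ 2 := one_le_pow₀ (by exact_mod_cast (by omega : 1 ≤ n))
  have he01 : ∀ᵐ ω ∂μ, |e ω| = 0 ∨ |e ω| = 1 :=
    abs_ae_eq_zero_or_one_of_three_point he hn2 h1 hm1 h0
  have hq : 1 / (n : ℝ≥0∞) ^ 2 ≤ 1 := ENNReal.div_le_of_le_mul (by simpa using hn2)
  have hmean : ∫ ω, |e ω| ∂μ = 1 / (n : ℝ) ^ 2 := by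
    rw [integral_abs_eq_of_measure_eq_zero he he01 hq h0]; simp
  have habs : ∀ i : ℤ, IdentDistrib (fun ω => |e ((T ^ i) ω)|) (fun ω => |e ω|) μ μ :=
    fun i => (hident i).comp measurable_abs
  set X : ℕ → Ω → ℝ := fun k ω => |e ((T ^ (-(k : ℤ))) ω)|
  have hX : ∀ k, AEMeasurable (X k) μ := fun k => (habs (-(k : ℤ))).aemeasurable_fst
  have hX01 : ∀ k, ∀ᵐ ω ∂μ, X k ω = 0 ∨ X k ω = 1 := fun k =>
    (habs (-(k : ℤ))).symm.ae_mem_snd (t := {0, 1}) ((measurableSet_singleton 1).insert 0) he01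
  have hXindep : iIndepFun X μ :=
    (hindep.comp (fun _ => abs) fun _ => measurable_abs).precomp
      (neg_injective.comp Nat.cast_injective)
  have hbound : ∀ ω, |h ω| ≤ ∑ k ∈ range (2 * n), X k ω := fun ω => by
    simpa [hdef, X] using abs_sum_sub_sum_shift_le (fun k => e ((T ^ (-(k : ℤ))) ω)) n
  have hc : (#(range (2 * n)) : ℝ) * (1 / (n : ℝ) ^ 2) = 2 / n := by
    rw [card_range]; push_cast; field_simp
  have hc1 : (2 : ℝ) / n ≤ 1 := (div_le_one (by positivity)).2 (by exact_mod_cast hn)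
  calc ∫ ω, |h ω| ^ p ∂μ ≤ ∫ ω, (∑ k ∈ range (2 * n), X k ω) ^ p ∂μ :=
        integral_mono_of_nonneg (.of_forall fun ω => by positivity) (integrable_sum_pow hX hX01 _ p)
          (.of_forall fun ω => pow_le_pow_left₀ (abs_nonneg _) (hbound ω) p)
    _ ≤ #(range (2 * n)) * (1 / (n : ℝ) ^ 2) * B p :=
        integral_sum_pow_le_mul_bell hX hX01 hXindep (by positivity)
          (fun k => ((habs (-(k : ℤ))).integral_eq.trans hmean).le) (hc ▸ hc1) hB0 hBrec hp
    _ = 2 * B p / n := by rw [hc]; ring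

/-- If `e` has the symmetric three-point distribution `μ{e = ±1} = 1/(2n²)`,
`μ{e = 0} = 1 - 1/n²`, the family `(e ∘ T^i)_{i ∈ ℤ}` is i.i.d. for an invertible
measure-preserving `T`, and `h = ∑_{i<n} e∘T⁻ⁱ - ∑_{i<n} e∘T^{-(n+i)}`, then
`E[|h|ᵖ] ≤ 2 B_p / n` for every positive integer `p`, where `B_p` is the `p`-th
Bell number. -/
theorem stmt11 {Ω : Type*} [MeasurableSpace Ω] (μ : Measure Ω)
    [IsProbabilityMeasure μ] (T : Equiv.Perm Ω)
    (hT : MeasurePreserving T μ μ) (hT' : MeasurePreserving T.symm μ μ)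
    (n : ℕ) (hn : 2 ≤ n) (e : Ω → ℝ) (he : Measurable e)
    (h1 : μ {ω | e ω = 1} = 1 / (2 * (n : ℝ≥0∞) ^ 2))
    (hm1 : μ {ω | e ω = -1} = 1 / (2 * (n : ℝ≥0∞) ^ 2))
    (h0 : μ {ω | e ω = 0} = 1 - 1 / (n : ℝ≥0∞) ^ 2)
    (hindep : iIndepFun
      (fun (i : ℤ) ω => e ((T ^ i) ω)) μ)
    (hident : ∀ i : ℤ, IdentDistrib (fun ω => e ((T ^ i) ω)) e μ μ)
    (h : Ω → ℝ)
    (hdef : h = fun ω => (∑ i ∈ Finset.range n, e ((T ^ (-(i : ℤ))) ω))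
      - ∑ i ∈ Finset.range n, e ((T ^ (-((n : ℤ) + i))) ω))
    (B : ℕ → ℝ) (hB0 : B 0 = 1) (hB1 : B 1 = 1)
    (hBrec : ∀ p : ℕ, B (p + 1) = ∑ k ∈ Finset.range (p + 1), (p.choose k : ℝ) * B k)
    (p : ℕ) (hp : 0 < p) :
    ∫ ω, |h ω| ^ p ∂μ ≤ 2 * B p / n :=
  stmt11_general μ T n hn e h1 hm1 h0 hindep hident h hdef B hB0 hBrec p hp
end
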